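/- arXiv:2205.09102 — 5 statements merged into one kernel-verified Lean document; each statement's English description precedes it below -/
import Mathlib

section
/- Let G be a connected undirected graph on a finite vertex set {1,...,V} with V ≥ 2, with strictly positive symmetric edge weights A^{ij} > 0 on its edges, and let L_A be the associated discrete weighted Laplacian acting on E^{(V-1)} = {x ∈ ℝ^V : Σ x_i = 0}. Let a ∈ E^{(V-1)} be the unique solution to L_A a = e_1 - e_V. If removing vertex 1 (and its incident edges) does not disconnect G, then a_1 > a_i for all i = 2,...,V. -/
/-!
The row of `L_A a` at a vertex `k` is `∑_{j ~ k} A k j (a k - a j)`, so wherever `a` attains its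
maximum this row is `≥ 0`, and it vanishes only if every neighbour of `k` also attains the maximum.
If `a 1 ≤ a i` for some `i ≠ 1`, the maximum of `a` is attained at some vertex `u ≠ 1`. Every row
off vertex `1` is `≤ 0`, so the maximum spreads from `u` along paths avoiding `1`; since `G - 1` is
connected it reaches `V`, where the row is `-1 < 0`, a contradiction. (Vertices are `Fin V`, so
`1` and `V` are `⟨0, _⟩` and `⟨V - 1, _⟩`.)
-/

open Matrix

theorem sum_sum_smul_single_sub_single_apply {ι R : Type*} [Fintype ι] [DecidableEq ι] [Ring R]
    (c : ι → ι → R) (k : ι) :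
    (∑ i, ∑ j, c i j • (Pi.single i 1 - Pi.single j 1) : ι → R) k = ∑ j, c k j - ∑ i, c i k := by
  simp only [Finset.sum_apply, Pi.smul_apply, Pi.sub_apply, smul_sub, Finset.sum_sub_distrib,
    Pi.single_apply, smul_eq_mul, mul_ite, mul_one, mul_zero, Finset.sum_ite_eq, Finset.mem_univ,
    if_true]
  rw [Finset.sum_comm]
  simp

namespace SimpleGraph

variable {ι : Type*} [Fintype ι] [LinearOrder ι] (G : SimpleGraph ι) [DecidableRel G.Adj]
  (A : ι → ι → ℝ)

noncomputable def weightedLaplacian : Matrix ι ι ℝ :=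
  ∑ i, ∑ j, if i < j ∧ G.Adj i j then
    A i j • vecMulVec (Pi.single i 1 - Pi.single j 1) (Pi.single i 1 - Pi.single j 1) else 0

variable {G A}

theorem weightedLaplacian_mulVec (f : ι → ℝ) :
    G.weightedLaplacian A *ᵥ f = ∑ i, ∑ j,
      (if i < j ∧ G.Adj i j then A i j * (f i - f j) else 0) • (Pi.single i 1 - Pi.single j 1) := by
  simp only [weightedLaplacian, sum_mulVec]
  refine Finset.sum_congr rfl fun i _ => Finset.sum_congr rfl fun j _ => ?_
  split_ifs
  · simp [smul_mulVec, vecMulVec_mulVec, sub_dotProduct, mul_smul, -MulOpposite.op_sub]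
  · simp

theorem weightedLaplacian_mulVec_apply (hsymm : ∀ i j, A i j = A j i) (f : ι → ℝ) (k : ι) :
    (G.weightedLaplacian A *ᵥ f) k = ∑ j ∈ G.neighborFinset k, A k j * (f k - f j) := by
  rw [weightedLaplacian_mulVec, sum_sum_smul_single_sub_single_apply, ← Finset.sum_sub_distrib,
    neighborFinset_eq_filter, Finset.sum_filter]
  refine Finset.sum_congr rfl fun j _ => ?_
  rcases lt_trichotomy k j with h | rfl | h
  · simp [h, h.not_gt]
  · simp
  · by_cases hadj : G.Adj k j
    · simp [h, h.not_gt, hadj, hadj.symm, hsymm j k]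
      ring
    · simp [h, hadj, G.adj_comm]

theorem weightedLaplacian_mulVec_apply_nonneg_of_forall_le (hsymm : ∀ i j, A i j = A j i)
    {f : ι → ℝ} {k : ι} (hpos : ∀ j, G.Adj k j → 0 < A k j) (hmax : ∀ j, f j ≤ f k) :
    0 ≤ (G.weightedLaplacian A *ᵥ f) k := by
  rw [weightedLaplacian_mulVec_apply hsymm]
  exact Finset.sum_nonneg fun j hj =>
    mul_nonneg (hpos j ((mem_neighborFinset G k j).1 hj)).le (sub_nonneg.2 (hmax j))

theorem eq_of_adj_of_weightedLaplacian_mulVec_apply_nonpos (hsymm : ∀ i j, A i j = A j i)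
    {f : ι → ℝ} {k j : ι} (hpos : ∀ j, G.Adj k j → 0 < A k j) (hmax : ∀ j, f j ≤ f k)
    (hsub : (G.weightedLaplacian A *ᵥ f) k ≤ 0) (hadj : G.Adj k j) : f j = f k := by
  have hterm_nonneg : ∀ i ∈ G.neighborFinset k, 0 ≤ A k i * (f k - f i) := fun i hi =>
    mul_nonneg (hpos i ((mem_neighborFinset G k i).1 hi)).le (sub_nonneg.2 (hmax i))
  have hsum : ∑ i ∈ G.neighborFinset k, A k i * (f k - f i) = 0 :=
    le_antisymm ((weightedLaplacian_mulVec_apply (G := G) hsymm f k).symm.trans_le hsub)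
      (Finset.sum_nonneg hterm_nonneg)
  have hterm_zero := (Finset.sum_eq_zero_iff_of_nonneg hterm_nonneg).1 hsum j
    ((mem_neighborFinset G k j).2 hadj)
  rcases mul_eq_zero.1 hterm_zero with hA | hf
  · exact absurd hA (hpos j hadj).ne'
  · linarith

theorem apply_eq_of_reachable_induce (hsymm : ∀ i j, A i j = A j i)
    (hpos : ∀ i j, G.Adj i j → 0 < A i j) {f : ι → ℝ} {M : ℝ} (hM : ∀ j, f j ≤ M) {s : Set ι}
    (hsub : ∀ x ∈ s, (G.weightedLaplacian A *ᵥ f) x ≤ 0) {x y : s}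
    (hxy : (G.induce s).Reachable x y) (hx : f x = M) : f y = M := by
  rw [reachable_iff_reflTransGen] at hxy
  induction hxy with
  | refl => exact hx
  | tail _ hyz ih =>
    rw [← ih]
    exact eq_of_adj_of_weightedLaplacian_mulVec_apply_nonpos hsymm (hpos _) (ih ▸ hM)
      (hsub _ (Subtype.prop _)) hyz

end SimpleGraph

/-- Strong maximum principle for the discrete weighted Laplacian: if `L_A a = e_1 - e_V`
on the connected weighted graph `G` (with `a` summing to zero), and removing vertex `1`
does not disconnect `G`, then `a_1 > a_i` for all other vertices `i`. -/
theorem discrete_laplacian_strong_max_principle {V : ℕ} (hV : 2 ≤ V)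
    (G : SimpleGraph (Fin V)) [DecidableRel G.Adj]
    (A : Fin V → Fin V → ℝ)
    (hsymm : ∀ i j, A i j = A j i)
    (hpos : ∀ i j, G.Adj i j → 0 < A i j)
    (L : Matrix (Fin V) (Fin V) ℝ)
    (hL : L = ∑ i : Fin V, ∑ j : Fin V,
      if i < j ∧ G.Adj i j then
        A i j • Matrix.vecMulVec (Pi.single i 1 - Pi.single j 1) (Pi.single i 1 - Pi.single j 1)
      else 0)
    (hcut : (G.induce {v : Fin V | v ≠ ⟨0, by omega⟩}).Connected)
    (a : Fin V → ℝ)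
    (hLa : L *ᵥ a = Pi.single (⟨0, by omega⟩ : Fin V) 1 - Pi.single (⟨V - 1, by omega⟩ : Fin V) 1) :
    ∀ i : Fin V, i ≠ ⟨0, by omega⟩ → a i < a (⟨0, by omega⟩ : Fin V) := by
  set z : Fin V := ⟨0, by omega⟩
  set w : Fin V := ⟨V - 1, by omega⟩
  have hwz : w ≠ z := Fin.ne_of_val_ne (by simp [w, z]; omega)
  change L = G.weightedLaplacian A at hL
  subst hL
  have hsub : ∀ x ∈ {v | v ≠ z}, (G.weightedLaplacian A *ᵥ a) x ≤ 0 := by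
    intro x hx
    rw [hLa, Pi.sub_apply, Pi.single_eq_of_ne hx, zero_sub, neg_nonpos, Pi.single_apply]
    split_ifs <;> norm_num
  have hw : (G.weightedLaplacian A *ᵥ a) w < 0 := by simp [hLa, hwz]
  intro i hi
  by_contra! hzi
  obtain ⟨u, hu, humax⟩ := Finset.exists_max_image (Finset.univ.erase z) a ⟨i, by simpa using hi⟩
  have hmax : ∀ j, a j ≤ a u := fun j => by
    by_cases hj : j = z
    · exact hj ▸ hzi.trans (humax i (by simpa using hi))
    · exact humax j (by simpa using hj)
  have hwu : a w = a u := SimpleGraph.apply_eq_of_reachable_induce hsymm hpos hmax hsub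
    (hcut.preconnected ⟨u, Finset.ne_of_mem_erase hu⟩ ⟨w, hwz⟩) rfl
  have hw_nonneg := SimpleGraph.weightedLaplacian_mulVec_apply_nonneg_of_forall_le hsymm (hpos w)
    (hwu ▸ hmax)
  exact hw.not_ge hw_nonneg
end

section
/- Let ⟨·,·⟩₁ be a non-degenerate symmetric bilinear form on ℝ^N given by ⟨u,v⟩₁ = u^T J v for a non-singular symmetric matrix J. Let A, B be q × N real matrices with rows A_i, B_i. Assume ⟨A_i, A_j⟩₁ = ⟨B_i, B_j⟩₁ for all i,j, that ker A^T = ker B^T, and that the rank of the common Gram matrix G equals the rank of A. Then there exists U ∈ GL(N) with U^T J U = J such that B = A U^T. -/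
open Matrix

/-! The rank condition says that the row space `W` of `A` is nondegenerate for `⟨·,·⟩₁`, and
`ker Aᵀ ⊆ ker Bᵀ` makes `A_i ↦ B_i` a well-defined linear map `W → ℝ^N`, isometric by the Gram
condition. Witt's extension argument extends it to an isometry of `ℝ^N`: an orthogonal basis of
the nondegenerate `W` is anisotropic, and its vectors can be moved one at a time onto their
images by a reflection in `a - b` or, when `a - b` is isotropic, by the reflections in `a + b` and
`b`, each fixing everything orthogonal to the vectors already placed. -/

lemma LinearMap.IsOrthogonal.comp {R M : Type*} [CommRing R] [AddCommGroup M] [Module R M]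
    {B : LinearMap.BilinForm R M} {f g : M → M} (hf : B.IsOrthogonal f) (hg : B.IsOrthogonal g) :
    B.IsOrthogonal (f ∘ g) :=
  fun x y => (hf (g x) (g y)).trans (hg x y)

namespace LinearMap.BilinForm

variable {K V : Type*} [Field K] [AddCommGroup V] [Module K V] {B : LinearMap.BilinForm K V}

noncomputable def reflection (B : LinearMap.BilinForm K V) {w : V} (hw : B w w ≠ 0) : V ≃ₗ[K] V :=
  Module.reflection (x := w) (f := (2 / B w w) • B w) (by simp [div_mul_cancel₀ _ hw])

lemma reflection_apply {w : V} (hw : B w w ≠ 0) (x : V) :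
    B.reflection hw x = x - ((2 / B w w) * B w x) • w :=
  Module.reflection_apply _ _

lemma reflection_apply_self {w : V} (hw : B w w ≠ 0) : B.reflection hw w = -w :=
  Module.reflection_apply_self _

lemma reflection_apply_eq_self {w x : V} (hw : B w w ≠ 0) (hx : B w x = 0) :
    B.reflection hw x = x := by
  rw [reflection_apply, hx, mul_zero, zero_smul, sub_zero]

lemma reflection_apply_eq_sub {w x : V} (hw : B w w ≠ 0) (h : B w w = 2 * B w x) :
    B.reflection hw x = x - w := by
  have hx : B w x ≠ 0 := right_ne_zero_of_mul (h ▸ hw)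
  have h2 : (2 : K) ≠ 0 := left_ne_zero_of_mul (h ▸ hw)
  rw [reflection_apply, h, div_mul_cancel_left₀ h2, inv_mul_cancel₀ hx, one_smul]

lemma isOrthogonal_reflection (hB : B.IsSymm) {w : V} (hw : B w w ≠ 0) :
    B.IsOrthogonal (B.reflection hw) := by
  intro x y
  simp only [reflection_apply, map_sub, map_smul, LinearMap.sub_apply, LinearMap.smul_apply,
    smul_eq_mul, hB.eq x w]
  field_simp
  ring

lemma exists_isOrthogonal_apply_eq [NeZero (2 : K)] (hB : B.IsSymm) {a b : V}
    (hab : B a a = B b b) (ha : B a a ≠ 0) :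
    ∃ g : V ≃ₗ[K] V, B.IsOrthogonal g ∧ g a = b ∧ ∀ x, B a x = 0 → B b x = 0 → g x = x := by
  have hba : B b a = B a b := hB.eq b a
  by_cases hd : B (a - b) (a - b) = 0
  · have hs : B (a + b) (a + b) ≠ 0 := by
      have hsum : B (a - b) (a - b) + B (a + b) (a + b) = 2 * (2 * B a a) := by
        simp only [map_sub, map_add, LinearMap.sub_apply, LinearMap.add_apply, hab]; ring
      rw [hd, zero_add] at hsum
      rw [hsum]
      exact mul_ne_zero two_ne_zero (mul_ne_zero two_ne_zero ha)
    have hb : B b b ≠ 0 := hab ▸ ha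
    refine ⟨(B.reflection hs).trans (B.reflection hb),
      (isOrthogonal_reflection hB hb).comp (isOrthogonal_reflection hB hs), ?_, fun x hxa hxb => ?_⟩
    · have hsa : B.reflection hs a = -b := by
        have h2 : B (a + b) (a + b) = 2 * B (a + b) a := by
          simp only [map_add, LinearMap.add_apply, hab, hba]; ring
        rw [reflection_apply_eq_sub hs h2, sub_add_cancel_left]
      simp [hsa, reflection_apply_self]
    · have hsx : B (a + b) x = 0 := by simp [hxa, hxb]
      simp [reflection_apply_eq_self hs hsx, reflection_apply_eq_self hb hxb]
  · refine ⟨B.reflection hd, isOrthogonal_reflection hB hd, ?_, fun x hxa hxb => ?_⟩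
    · have h2 : B (a - b) (a - b) = 2 * B (a - b) a := by
        simp only [map_sub, LinearMap.sub_apply, hab, hba]; ring
      rw [reflection_apply_eq_sub hd h2, sub_sub_cancel]
    · exact reflection_apply_eq_self hd (by simp [hxa, hxb])

lemma exists_isOrthogonal_apply_eq_of_isOrthoᵢ [NeZero (2 : K)] (hB : B.IsSymm) {n : ℕ}
    (a b : Fin n → V) (hgram : ∀ i j, B (a i) (a j) = B (b i) (b j)) (hO : B.IsOrthoᵢ a)
    (hani : ∀ i, B (a i) (a i) ≠ 0) :
    ∃ g : V ≃ₗ[K] V, B.IsOrthogonal g ∧ (∀ i, g (a i) = b i) ∧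
      ∀ x, (∀ i, B (a i) x = 0) → (∀ i, B (b i) x = 0) → g x = x := by
  induction n with
  | zero => exact ⟨LinearEquiv.refl K V, fun _ _ => rfl, finZeroElim, fun _ _ _ => rfl⟩
  | succ n ih =>
    obtain ⟨g₀, hg₀, hg₀a, hg₀fix⟩ := exists_isOrthogonal_apply_eq hB (hgram 0 0) (hani 0)
    obtain ⟨g₁, hg₁, hg₁a, hg₁fix⟩ := ih (fun i => g₀ (a i.succ)) (fun i => b i.succ)
      (fun i j => (hg₀ _ _).trans (hgram _ _))
      (fun i j hij => (hg₀ _ _).trans (hO ((Fin.succ_injective _).ne hij)))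
      (fun i => (hg₀ _ _).trans_ne (hani _))
    refine ⟨g₀.trans g₁, hg₁.comp hg₀, Fin.cases ?head hg₁a, fun x hxa hxb => ?_⟩
    case head =>
      change g₁ (g₀ (a 0)) = b 0
      rw [hg₀a]
      refine hg₁fix _ (fun i => ?_) (fun i => ?_)
      · rw [← hg₀a, hg₀]
        exact hO (Fin.succ_ne_zero i)
      · rw [← hgram]
        exact hO (Fin.succ_ne_zero i)
    · have hx : g₀ x = x := hg₀fix x (hxa 0) (hxb 0)
      change g₁ (g₀ x) = x
      rw [hx]
      refine hg₁fix x (fun i => ?_) (fun i => hxb i.succ)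
      rw [← hx, hg₀]
      exact hxa i.succ

theorem exists_isOrthogonal_extension [NeZero (2 : K)] (hB : B.IsSymm) {W : Submodule K V}
    [FiniteDimensional K W] (hW : (B.restrict W).Nondegenerate) (h : W →ₗ[K] V)
    (hh : ∀ x y, B (h x) (h y) = B x y) :
    ∃ g : V ≃ₗ[K] V, B.IsOrthogonal g ∧ ∀ x : W, g x = h x := by
  have : Invertible (2 : K) := invertibleOfNonzero two_ne_zero
  obtain ⟨v, hv⟩ := exists_orthogonal_basis (isSymm_iff.mp (hB.restrict W))
  have hani : ∀ i, B.restrict W (v i) (v i) ≠ 0 := hv.not_isOrtho_basis_self_of_separatingLeft hW.1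
  obtain ⟨g, hg, hgv, -⟩ := exists_isOrthogonal_apply_eq_of_isOrthoᵢ hB (fun i => (v i : V))
    (fun i => h (v i)) (fun i j => (hh _ _).symm) hv hani
  have hext : g.toLinearMap ∘ₗ W.subtype = h := v.ext hgv
  exact ⟨g, hg, LinearMap.congr_fun hext⟩

theorem exists_isOrthogonal_comp_eq [NeZero (2 : K)] {M : Type*} [AddCommGroup M] [Module K M]
    [FiniteDimensional K M] (hB : B.IsSymm) {α β : M →ₗ[K] V}
    (hker : LinearMap.ker α ≤ LinearMap.ker β) (hgram : ∀ x y, B (α x) (α y) = B (β x) (β y))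
    (hα : (B.restrict (LinearMap.range α)).Nondegenerate) :
    ∃ g : V ≃ₗ[K] V, B.IsOrthogonal g ∧ g.toLinearMap ∘ₗ α = β := by
  let h : LinearMap.range α →ₗ[K] V :=
    (LinearMap.ker α).liftQ β hker ∘ₗ α.quotKerEquivRange.symm.toLinearMap
  have hh : ∀ x, h ⟨α x, LinearMap.mem_range_self α x⟩ = β x := fun x => by simp [h]
  obtain ⟨g, hg, hgh⟩ := exists_isOrthogonal_extension hB hα h (by
    rintro ⟨_, x, rfl⟩ ⟨_, y, rfl⟩
    rw [hh, hh]
    exact (hgram x y).symm)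
  exact ⟨g, hg, LinearMap.ext fun x => (hgh _).trans (hh x)⟩

end LinearMap.BilinForm

namespace Matrix

variable {K m n o : Type*} [Field K] [Fintype n] [Fintype o]

lemma ker_mulVecLin_mul_eq_of_rank_eq (X : Matrix m n K) (Y : Matrix n o K)
    (h : (X * Y).rank = Y.rank) :
    LinearMap.ker (X * Y).mulVecLin = LinearMap.ker Y.mulVecLin := by
  have hle : LinearMap.ker Y.mulVecLin ≤ LinearMap.ker (X * Y).mulVecLin := by
    rw [mulVecLin_mul]
    exact LinearMap.ker_le_ker_comp _ _
  refine (Submodule.eq_of_le_of_finrank_eq hle ?_).symm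
  have hXY := (X * Y).mulVecLin.finrank_range_add_finrank_ker
  have hY := Y.mulVecLin.finrank_range_add_finrank_ker
  simp only [rank] at h
  omega

variable [Fintype m] [DecidableEq m] [DecidableEq n]

lemma toBilin'_transpose_mulVec (J : Matrix n n K) (A : Matrix m n K) (x y : m → K) :
    J.toBilin' (Aᵀ *ᵥ x) (Aᵀ *ᵥ y) = (A * J * Aᵀ).toBilin' x y := by
  rw [← transpose_transpose A, ← toBilin'_comp, transpose_transpose]
  rfl

lemma nondegenerate_restrict_range_of_rank_mul_mul_transpose {J : Matrix n n K}
    (hJ : J.IsSymm) {A : Matrix m n K} (h : (A * J * Aᵀ).rank = A.rank) :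
    (J.toBilin'.restrict (LinearMap.range Aᵀ.mulVecLin)).Nondegenerate := by
  have hker := ker_mulVecLin_mul_eq_of_rank_eq (A * J) Aᵀ (by rw [h, rank_transpose])
  refine (LinearMap.IsRefl.nondegenerate_iff_separatingRight
    ((isSymm_toBilin'_iff_isSymm.mpr hJ).restrict _).isRefl).mpr ?_
  rintro ⟨_, c, rfl⟩ hc
  have hGc : (A * J * Aᵀ) *ᵥ c = 0 := funext fun i => by
    have hi := hc ⟨_, Pi.single i 1, rfl⟩
    simp only [LinearMap.BilinForm.restrict_apply, LinearMap.domRestrict_apply, mulVecLin_apply,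
      toBilin'_transpose_mulVec] at hi
    rwa [toBilin'_apply', single_dotProduct, one_mul] at hi
  have hAc : Aᵀ *ᵥ c = 0 := by
    rw [← mulVecLin_apply, ← LinearMap.mem_ker, ← hker]
    exact hGc
  exact Subtype.ext hAc

lemma transpose_toMatrix'_mul_mul_toMatrix'_of_isOrthogonal {J : Matrix n n K}
    {g : (n → K) →ₗ[K] n → K} (hg : J.toBilin'.IsOrthogonal g) :
    (LinearMap.toMatrix' g)ᵀ * J * LinearMap.toMatrix' g = J := by
  have hcomp : J.toBilin'.comp g g = J.toBilin' := LinearMap.ext₂ hg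
  simpa using congrArg LinearMap.BilinForm.toMatrix' hcomp

end Matrix

theorem gram_isometry_exists_general {q N : ℕ}
    (J : Matrix (Fin N) (Fin N) ℝ) (hJsymm : Jᵀ = J)
    (A B : Matrix (Fin q) (Fin N) ℝ)
    (hGram : A * J * Aᵀ = B * J * Bᵀ)
    (hker : LinearMap.ker (Aᵀ.mulVecLin) = LinearMap.ker (Bᵀ.mulVecLin))
    (hrank : (A * J * Aᵀ).rank = A.rank) :
    ∃ U : Matrix (Fin N) (Fin N) ℝ, IsUnit U.det ∧ Uᵀ * J * U = J ∧ B = A * Uᵀ := by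
  obtain ⟨g, hg, hgA⟩ := J.toBilin'.exists_isOrthogonal_comp_eq
    (isSymm_toBilin'_iff_isSymm.mpr hJsymm) hker.le
    (fun x y => by simp only [mulVecLin_apply, toBilin'_transpose_mulVec, hGram])
    (nondegenerate_restrict_range_of_rank_mul_mul_transpose hJsymm hrank)
  refine ⟨LinearMap.toMatrix' g, ?_, transpose_toMatrix'_mul_mul_toMatrix'_of_isOrthogonal hg, ?_⟩
  · rw [LinearMap.det_toMatrix']
    exact g.isUnit_det'
  · have hBt : LinearMap.toMatrix' (g : (Fin N → ℝ) →ₗ[ℝ] Fin N → ℝ) * Aᵀ = Bᵀ := by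
      rw [← LinearMap.toMatrix'_toLin' Aᵀ, ← LinearMap.toMatrix'_toLin' Bᵀ,
        ← LinearMap.toMatrix'_comp, toLin'_apply', toLin'_apply', hgA]
    rw [← transpose_transpose B, ← hBt, transpose_mul, transpose_transpose]

/-- Witt-type extension lemma: if two `q × N` matrices `A, B` have the same Gram matrix
with respect to a non-degenerate symmetric bilinear form `⟨u,v⟩₁ = uᵀ J v`, the kernels
of `Aᵀ` and `Bᵀ` coincide, and the rank of the Gram matrix equals the rank of `A`,
then `B = A Uᵀ` for some isometry `U` of the bilinear form. -/
theorem gram_isometry_exists {q N : ℕ}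
    (J : Matrix (Fin N) (Fin N) ℝ) (hJsymm : Jᵀ = J) (hJunit : IsUnit J.det)
    (A B : Matrix (Fin q) (Fin N) ℝ)
    (hGram : A * J * Aᵀ = B * J * Bᵀ)
    (hker : LinearMap.ker (Aᵀ.mulVecLin) = LinearMap.ker (Bᵀ.mulVecLin))
    (hrank : (A * J * Aᵀ).rank = A.rank) :
    ∃ U : Matrix (Fin N) (Fin N) ℝ, IsUnit U.det ∧ Uᵀ * J * U = J ∧ B = A * Uᵀ :=
  gram_isometry_exists_general J hJsymm A B hGram hker hrank
end

section
/- Let P ⊂ ℝ^{n+1} be an open convex polyhedron (a finite intersection of open halfspaces) and let S^n be the unit sphere. If S^n \ P is connected but S^n \ closure(P) is disconnected, then there exists a point p ∈ closure(P) ∩ S^n at which the lower density of P ∩ S^n is zero, i.e. liminf_{r→0+} H^n(P ∩ S^n ∩ B(p,r)) / r^n = 0. -/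
open MeasureTheory Topology
open scoped RealInnerProductSpace ENNReal NNReal

/-!
The hypotheses force `P ≠ ∅`. Then the sphere minus `P` is the union of the closed caps
`{⟪a i, x⟫ ≥ b i}` and the sphere minus `closure P` is the union of the open caps
`{⟪a i, x⟫ > b i}`, each of which is connected. A separation of the latter therefore sorts the
caps with nonempty interior into two classes, and connectedness of the former forces two closed
caps from different classes to meet, at a point `p` which turns out to lie in `closure P`.
The two open caps are disjoint and tangent at `p`, so their tangential normals at `p` are
opposite, and `P ∩ S^n` is squeezed into a slab of width `O(r²)` around the tangent hyperplane
within distance `r` of `p`. Writing the sphere near `p` as a Lipschitz graph over the tangent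
hyperplane, that slab has `H^n`-measure `O(r^{n+1})`, so the density at `p` vanishes.
-/

section

open Filter Set

lemma HasDerivAt.eventually_nhdsGT_lt {f : ℝ → ℝ} {f' x : ℝ} (hf : HasDerivAt f f' x)
    (hf' : 0 < f') : ∀ᶠ y in 𝓝[>] x, f x < f y := by
  have hslope : Tendsto (slope f x) (𝓝[>] x) (𝓝 f') :=
    (hasDerivWithinAt_iff_tendsto_slope' (lt_irrefl x)).1 hf.hasDerivWithinAt
  filter_upwards [hslope.eventually (lt_mem_nhds hf'), self_mem_nhdsWithin] with y hy hxy
  rw [slope_def_field] at hy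
  exact sub_pos.1 ((div_pos_iff_of_pos_right (sub_pos.2 hxy)).1 hy)

lemma inter_closure_nonempty_of_isPreconnected_diff {X : Type*} [TopologicalSpace X]
    {T s : Set X} (hconn : IsPreconnected (T \ s)) (hdisc : ¬ IsPreconnected (T \ closure s)) :
    (T ∩ closure s).Nonempty := by
  by_contra h
  rw [not_nonempty_iff_eq_empty, ← disjoint_iff_inter_eq_empty] at h
  rw [h.sdiff_eq_left] at hdisc
  rw [(h.mono_right subset_closure).sdiff_eq_left] at hconn
  exact hdisc hconn

lemma exists_partition_of_not_isPreconnected_iUnion {X ι : Type*} [TopologicalSpace X]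
    {s : ι → Set X} (hs : ∀ i, IsPreconnected (s i)) (h : ¬ IsPreconnected (⋃ i, s i)) :
    ∃ I J : Set ι, (∀ k, k ∈ I ∨ k ∈ J) ∧ (∃ i ∈ I, (s i).Nonempty) ∧ (∃ j ∈ J, (s j).Nonempty) ∧
      ∀ i ∈ I, ∀ j ∈ J, Disjoint (s i) (s j) := by
  simp only [isPreconnected_iff_subset_of_disjoint, not_forall, not_or] at h
  obtain ⟨U, V, hU, hV, hcov, hUV, hnU, hnV⟩ := h
  have hsplit : ∀ k, s k ⊆ U ∨ s k ⊆ V := fun k =>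
    isPreconnected_iff_subset_of_disjoint.1 (hs k) U V hU hV ((subset_iUnion s k).trans hcov)
      (subset_empty_iff.1 (hUV ▸ inter_subset_inter_left _ (subset_iUnion s k)))
  have hclass : ∀ {W W' : Set X}, (∀ k, s k ⊆ W ∨ s k ⊆ W') → ¬ ⋃ k, s k ⊆ W' →
      ∃ i ∈ {k | s k ⊆ W}, (s i).Nonempty := fun {W W'} hsplit hn => by
    obtain ⟨x, hx, hxW'⟩ := not_subset.1 hn
    obtain ⟨i, hi⟩ := mem_iUnion.1 hx
    exact ⟨i, (hsplit i).resolve_right fun h => hxW' (h hi), x, hi⟩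
  refine ⟨{k | s k ⊆ U}, {k | s k ⊆ V}, hsplit, hclass hsplit hnV,
    hclass (fun k => (hsplit k).symm) hnU, fun i hi j hj => disjoint_left.2 fun x hxi hxj => ?_⟩
  exact (hUV ▸ ⟨mem_iUnion.2 ⟨i, hxi⟩, hi hxi, hj hxj⟩ : x ∈ (∅ : Set X))

lemma IsPreconnected.inter_nonempty_of_subset_union_finite {X : Type*} [TopologicalSpace X]
    [T1Space X] {s A B W : Set X} (hs : IsPreconnected s) (hA : IsClosed A) (hB : IsClosed B)
    (hW : W.Finite) (hcov : s ⊆ A ∪ B ∪ W) (hsA : (s ∩ A).Nonempty) (hsB : (s ∩ B).Nonempty) :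
    (s ∩ (A ∩ B)).Nonempty := by
  obtain ⟨z, hzs, hzA | hzW, hzB⟩ := isPreconnected_closed_iff.1 hs (A ∪ W \ B) B
    (hA.union hW.sdiff.isClosed) hB (fun x hx => by by_cases x ∈ B <;> grind)
    (hsA.mono fun x hx => ⟨hx.1, Or.inl hx.2⟩) hsB
  · exact ⟨z, hzs, hzA, hzB⟩
  · exact absurd hzB hzW.2

end

namespace PolyhedronSphere

open Filter Metric Set

variable {E : Type*} [NormedAddCommGroup E] [InnerProductSpace ℝ E]

def openCap (a : E) (b : ℝ) : Set E := {x | x ∈ sphere (0 : E) 1 ∧ b < ⟪a, x⟫}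

def closedCap (a : E) (b : ℝ) : Set E := {x | x ∈ sphere (0 : E) 1 ∧ b ≤ ⟪a, x⟫}

lemma openCap_subset_closedCap (a : E) (b : ℝ) : openCap a b ⊆ closedCap a b :=
  fun _ hx => ⟨hx.1, hx.2.le⟩

lemma isClosed_closedCap (a : E) (b : ℝ) : IsClosed (closedCap a b) :=
  show IsClosed (sphere (0 : E) 1 ∩ {x | b ≤ ⟪a, x⟫}) from
    isClosed_sphere.inter (isClosed_le continuous_const (continuous_const.inner continuous_id))

lemma inner_sub_smul_add {a p x : E} (b : ℝ) : ⟪a, x⟫ = ⟪a - b • p, x⟫ + b * ⟪p, x⟫ := by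
  rw [inner_sub_left, real_inner_smul_left]; ring

lemma inner_sub_smul_self {a p : E} {b : ℝ} (hp : ‖p‖ = 1) (hab : ⟪a, p⟫ = b) :
    ⟪p, a - b • p⟫ = 0 := by
  rw [inner_sub_right, real_inner_smul_right, real_inner_self_eq_norm_sq, hp, real_inner_comm, hab]
  ring

/-- Along the segment from a unit vector `x` to a unit vector `c`, the normalized point gets
closer to `c`. -/
lemma inner_mul_norm_segment_le {c x : E} (hc : ‖c‖ = 1) (hx : ‖x‖ = 1) {t : ℝ}
    (ht₀ : 0 ≤ t) (ht₁ : t ≤ 1) :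
    ⟪c, x⟫ * ‖(1 - t) • x + t • c‖ ≤ ⟪c, (1 - t) • x + t • c⟫ := by
  have hcx : |⟪c, x⟫| ≤ 1 := by simpa [hc, hx] using abs_real_inner_le_norm c x
  have hnorm : ‖(1 - t) • x‖ = 1 - t ∧ ‖t • c‖ = t := by
    simp [norm_smul, hc, hx, abs_of_nonneg ht₀, abs_of_nonneg (sub_nonneg.2 ht₁)]
  have hle : ‖(1 - t) • x + t • c‖ ≤ 1 := by
    linarith [norm_add_le ((1 - t) • x) (t • c)]
  have hge : 1 - 2 * t ≤ ‖(1 - t) • x + t • c‖ := by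
    have := norm_sub_norm_le ((1 - t) • x) (-(t • c))
    rw [sub_neg_eq_add, norm_neg] at this
    linarith
  rw [inner_add_right, real_inner_smul_right, real_inner_smul_right, real_inner_self_eq_norm_sq, hc]
  rcases abs_le.1 hcx with ⟨h₁, h₂⟩
  rcases le_total 0 ⟪c, x⟫ with h | h
  · nlinarith
  · nlinarith

lemma isPreconnected_openCap {a : E} {b : ℝ} (h : ∃ x₀ ∈ sphere (0 : E) 1, ⟪a, x₀⟫ ≤ b) :
    IsPreconnected (openCap a b) := by
  obtain ⟨x₀, hx₀, hx₀b⟩ := h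
  rcases (openCap a b).eq_empty_or_nonempty with hemp | ⟨x₁, hx₁⟩
  · rw [hemp]; exact isPreconnected_empty
  have hlow : ∀ x ∈ openCap a b, -‖a‖ < ⟪a, x⟫ := fun x hx => by
    have := neg_le_of_abs_le (abs_real_inner_le_norm a x₀)
    rw [mem_sphere_zero_iff_norm.1 hx₀, mul_one] at this
    linarith [hx.2]
  have ha : 0 < ‖a‖ := by
    have := real_inner_le_norm a x₁
    rw [mem_sphere_zero_iff_norm.1 hx₁.1, mul_one] at this
    linarith [hlow x₁ hx₁]
  set c : E := ‖a‖⁻¹ • a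
  have hc : ‖c‖ = 1 := by simp [c, norm_smul, ha.ne']
  have hc_inner : ∀ x, ⟪c, x⟫ = ‖a‖⁻¹ * ⟪a, x⟫ := fun x => real_inner_smul_left _ _ _
  refine isPreconnected_of_forall c fun y hy => ?_
  have hy1 : ‖y‖ = 1 := mem_sphere_zero_iff_norm.1 hy.1
  set z : ℝ → E := fun t => (1 - t) • y + t • c
  have hz : ∀ t, z t ≠ 0 := fun t hzt => by
    have h1 : ⟪c + y, z t⟫ = 1 + ⟪c, y⟫ := by
      simp only [z, inner_add_left, inner_add_right, real_inner_smul_right,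
        real_inner_self_eq_norm_sq, hc, hy1, real_inner_comm c y]
      ring
    have h2 : -1 < ⟪c, y⟫ := by
      rw [hc_inner, neg_lt, ← mul_neg, inv_mul_lt_iff₀ ha]
      linarith [hlow y hy]
    rw [hzt, inner_zero_right] at h1
    linarith
  have hzc : Continuous z := by fun_prop
  set f : ℝ → E := fun t => ‖z t‖⁻¹ • z t
  refine ⟨f '' Icc 0 1, ?_, ⟨1, ⟨zero_le_one, le_rfl⟩, by simp [f, z, hc]⟩,
    ⟨0, ⟨le_rfl, zero_le_one⟩, by simp [f, z, hy1]⟩,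
    isPreconnected_Icc.image f
      ((hzc.norm.inv₀ fun t => norm_ne_zero_iff.2 (hz t)).smul hzc).continuousOn⟩
  rintro _ ⟨t, ⟨ht₀, ht₁⟩, rfl⟩
  have hpos : 0 < ‖z t‖ := norm_pos_iff.2 (hz t)
  refine ⟨by simp [f, norm_smul, hpos.ne'], ?_⟩
  have hseg := inner_mul_norm_segment_le hc hy1 ht₀ ht₁
  rw [hc_inner, hc_inner, mul_assoc, mul_le_mul_iff_of_pos_left (inv_pos.2 ha)] at hseg
  rw [real_inner_smul_right, lt_inv_mul_iff₀ hpos]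
  nlinarith [hy.2]

lemma subsingleton_closedCap {a : E} {b : ℝ} (hb : {x : E | ⟪a, x⟫ < b}.Nonempty)
    (h : openCap a b = ∅) : (closedCap a b).Subsingleton := by
  rcases eq_or_ne a 0 with rfl | ha
  · obtain ⟨q, hq⟩ := hb
    intro x hx
    have hq' : ⟪(0 : E), q⟫ < b := hq
    have hx' := hx.2
    rw [inner_zero_left] at hq' hx'
    linarith
  have hna : 0 < ‖a‖ := norm_pos_iff.2 ha
  have hb : ‖a‖ ≤ b := by
    by_contra! hlt
    have hmem : ‖a‖⁻¹ • a ∈ openCap a b := ⟨by simp [norm_smul, hna.ne'], by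
      rwa [real_inner_smul_right, real_inner_self_eq_norm_sq, sq, inv_mul_cancel_left₀ hna.ne']⟩
    simp [h] at hmem
  suffices ∀ z ∈ closedCap a b, z = ‖a‖⁻¹ • a from
    fun x hx y hy => (this x hx).trans (this y hy).symm
  rintro z ⟨hz, hzb⟩
  rw [mem_sphere_zero_iff_norm] at hz
  have heq : ⟪a, z⟫ = ‖a‖ * ‖z‖ :=
    le_antisymm (real_inner_le_norm a z) (by rw [hz, mul_one]; linarith)
  rw [inner_eq_norm_mul_iff_real, hz, one_smul] at heq
  rw [eq_inv_smul_iff₀ hna.ne']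
  exact heq.symm

lemma sphere_diff_singleton_subset_openCap {p : E} {b : ℝ} (hp : ‖p‖ = 1)
    (hne : (openCap (b • p) b).Nonempty) : sphere (0 : E) 1 \ {p} ⊆ openCap (b • p) b := by
  have hinner : ∀ x : E, ⟪b • p, x⟫ = b * ⟪p, x⟫ := fun x => real_inner_smul_left _ _ _
  obtain ⟨x₁, hx₁, hx₁b⟩ := hne
  have hb : b < 0 := by
    have := real_inner_le_norm p x₁
    rw [hp, mem_sphere_zero_iff_norm.1 hx₁, one_mul] at this
    rw [hinner] at hx₁b
    nlinarith
  rintro x ⟨hx, hxp⟩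
  have hx1 : ‖x‖ = 1 := mem_sphere_zero_iff_norm.1 hx
  have hdist : 0 < ‖x - p‖ := norm_pos_iff.2 (sub_ne_zero.2 hxp)
  have hsq : ‖x - p‖ ^ 2 = 2 - 2 * ⟪p, x⟫ := by
    rw [norm_sub_sq_real, hx1, hp, real_inner_comm]; ring
  have hlt : ⟪p, x⟫ < 1 := by nlinarith
  refine ⟨hx, ?_⟩
  rw [hinner]
  nlinarith [mul_pos_of_neg_of_neg hb (sub_neg.2 hlt)]

lemma eventually_mem_openCap {a p v : E} {b : ℝ} (hp : ‖p‖ = 1) (hv : ‖v‖ = 1)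
    (hpv : ⟪p, v⟫ = 0) (hab : ⟪a, p⟫ = b) (hav : 0 < ⟪a, v⟫) :
    ∀ᶠ t in 𝓝[>] (0 : ℝ), Real.cos t • p + Real.sin t • v ∈ openCap a b := by
  have hderiv : HasDerivAt (fun t => Real.cos t * b + Real.sin t * ⟪a, v⟫) ⟪a, v⟫ 0 :=
    (((Real.hasDerivAt_cos 0).mul_const b).add
      ((Real.hasDerivAt_sin 0).mul_const ⟪a, v⟫)).congr_deriv (by simp)
  filter_upwards [hderiv.eventually_nhdsGT_lt hav] with t ht
  refine ⟨?_, ?_⟩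
  · rw [mem_sphere_zero_iff_norm, ← pow_eq_one_iff_of_nonneg (norm_nonneg _) two_ne_zero,
      norm_add_sq_real]
    simp only [norm_smul, real_inner_smul_left, real_inner_smul_right, hpv, hp, hv,
      Real.norm_eq_abs, mul_pow, sq_abs]
    linarith [Real.cos_sq_add_sin_sq t]
  · simpa [inner_add_right, real_inner_smul_right, hab] using ht

lemma mem_closure_openCap {a p : E} {b : ℝ} (hp : ‖p‖ = 1) (hab : ⟪a, p⟫ = b)
    (hα : a - b • p ≠ 0) : p ∈ closure (openCap a b) := by
  set α := a - b • p with hαdef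
  have hpα : ⟪p, α⟫ = 0 := inner_sub_smul_self hp hab
  have hαn : 0 < ‖α‖ := norm_pos_iff.2 hα
  set u := ‖α‖⁻¹ • α
  have hu : ‖u‖ = 1 := by simp [u, norm_smul, hαn.ne']
  have hpu : ⟪p, u⟫ = 0 := by rw [real_inner_smul_right, hpα, mul_zero]
  have hau : ⟪a, u⟫ = ‖α‖ := by
    rw [inner_sub_smul_add b, hpu, mul_zero, add_zero, ← hαdef, real_inner_smul_right,
      real_inner_self_eq_norm_sq, sq, inv_mul_cancel_left₀ hαn.ne']
  have hγ : Tendsto (fun t : ℝ => Real.cos t • p + Real.sin t • u) (𝓝[>] 0) (𝓝 p) := by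
    have := (by fun_prop : Continuous fun t : ℝ => Real.cos t • p + Real.sin t • u).tendsto 0
    simpa using this.mono_left nhdsWithin_le_nhds
  exact mem_closure_of_tendsto hγ (eventually_mem_openCap hp hu hpu hab (hau ▸ hαn))

lemma inter_openCap_nonempty_of_mem_closure {a a' p : E} {b b' : ℝ} (hp : p ∈ openCap a b)
    (hp' : p ∈ closure (openCap a' b')) : (openCap a b ∩ openCap a' b').Nonempty := by
  obtain ⟨z, hz, hz'⟩ := mem_closure_iff.1 hp' {x | b < ⟪a, x⟫}
    (isOpen_lt continuous_const (continuous_const.inner continuous_id)) hp.2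
  exact ⟨z, ⟨hz'.1, hz⟩, hz'⟩

lemma notMem_openCap_of_disjoint {a a' p : E} {b b' : ℝ} (hp : p ∈ closedCap a' b')
    (hne : (openCap a' b').Nonempty) (hdisj : Disjoint (openCap a b) (openCap a' b'))
    (hcover : ¬ sphere (0 : E) 1 ⊆ openCap a b ∪ openCap a' b') : p ∉ openCap a b := by
  intro hpa
  have hp1 : ‖p‖ = 1 := mem_sphere_zero_iff_norm.1 hp.1
  rcases hp.2.lt_or_eq with hlt | heq
  · exact hdisj.ne_of_mem hpa ⟨hp.1, hlt⟩ rfl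
  by_cases hα : a' - b' • p = 0
  · rw [sub_eq_zero] at hα
    subst hα
    refine hcover fun x hx => ?_
    by_cases hxp : x = p
    · exact Or.inl (hxp ▸ hpa)
    · exact Or.inr (sphere_diff_singleton_subset_openCap hp1 hne ⟨hx, hxp⟩)
  · exact (inter_openCap_nonempty_of_mem_closure hpa
      (mem_closure_openCap hp1 heq.symm hα)).not_disjoint hdisj

lemma sub_smul_ne_zero_of_disjoint {a a' p : E} {b b' : ℝ} (hp : ‖p‖ = 1)
    (hp' : p ∉ openCap a' b') (hne : (openCap a b).Nonempty) (hne' : (openCap a' b').Nonempty)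
    (hdisj : Disjoint (openCap a b) (openCap a' b')) : a - b • p ≠ 0 := by
  intro hα
  rw [sub_eq_zero] at hα
  subst hα
  obtain ⟨x, hx⟩ := hne'
  have hxp : x ≠ p := by rintro rfl; exact hp' hx
  exact hdisj.ne_of_mem (sphere_diff_singleton_subset_openCap hp hne ⟨hx.1, hxp⟩) hx rfl

/-- Two disjoint open caps whose boundaries pass through `p` have opposite tangential normals
at `p`: otherwise a great circle leaving `p` in a common tangent direction enters both. -/
lemma norm_smul_add_norm_smul_eq_zero_of_disjoint {a a' p : E} {b b' : ℝ} (hp : ‖p‖ = 1)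
    (hab : ⟪a, p⟫ = b) (hab' : ⟪a', p⟫ = b') (hdisj : Disjoint (openCap a b) (openCap a' b')) :
    ‖a' - b' • p‖ • (a - b • p) + ‖a - b • p‖ • (a' - b' • p) = 0 := by
  set α := a - b • p with hα
  set β := a' - b' • p with hβ
  set v := ‖β‖ • α + ‖α‖ • β
  by_contra hv
  set s := ‖α‖ * ‖β‖ + ⟪α, β⟫
  have hs : 0 ≤ s := by linarith [neg_le_of_abs_le (abs_real_inner_le_norm α β)]
  have hvv : ‖v‖ ^ 2 = 2 * (‖α‖ * ‖β‖ * s) := by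
    rw [norm_add_sq_real, norm_smul, norm_smul, real_inner_smul_left, real_inner_smul_right,
      Real.norm_eq_abs, Real.norm_eq_abs, abs_norm, abs_norm]
    ring
  have hvn : 0 < ‖v‖ := norm_pos_iff.2 hv
  have hprod : ‖α‖ * ‖β‖ * s ≠ 0 := by nlinarith [pow_pos hvn 2]
  have hαn : 0 < ‖α‖ := (norm_nonneg _).lt_of_ne' (left_ne_zero_of_mul (left_ne_zero_of_mul hprod))
  have hβn : 0 < ‖β‖ := (norm_nonneg _).lt_of_ne' (right_ne_zero_of_mul (left_ne_zero_of_mul hprod))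
  have hs' : 0 < s := hs.lt_of_ne' (right_ne_zero_of_mul hprod)
  set w := ‖v‖⁻¹ • v
  have hw : ‖w‖ = 1 := by simp [w, norm_smul, hvn.ne']
  have hpw : ⟪p, w⟫ = 0 := by
    simp [w, v, inner_add_right, real_inner_smul_right, hα, hβ, inner_sub_smul_self hp hab,
      inner_sub_smul_self hp hab']
  have hinner : ∀ {a : E} (b : ℝ), ⟪a, w⟫ = ‖v‖⁻¹ * ⟪a - b • p, v⟫ := fun {a} b => by
    rw [inner_sub_smul_add b, hpw, mul_zero, add_zero, real_inner_smul_right]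
  have haw : 0 < ⟪a, w⟫ := by
    rw [hinner b, ← hα]
    simp only [v, inner_add_right, real_inner_smul_right, real_inner_self_eq_norm_sq]
    exact mul_pos (inv_pos.2 hvn) (by nlinarith)
  have ha'w : 0 < ⟪a', w⟫ := by
    rw [hinner b', ← hβ]
    simp only [v, inner_add_right, real_inner_smul_right, real_inner_self_eq_norm_sq,
      real_inner_comm α β]
    exact mul_pos (inv_pos.2 hvn) (by nlinarith)
  obtain ⟨t, ht, ht'⟩ := ((eventually_mem_openCap hp hw hpw hab haw).and
    (eventually_mem_openCap hp hw hpw hab' ha'w)).exists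
  exact hdisj.ne_of_mem ht ht' rfl

/-- The tangential normals `a - b • p` and `a' - b' • p` are positive and negative multiples of
one unit vector `u`, so the two inequalities bound `⟪u, x⟫` from both sides by multiples of
`1 - ⟪p, x⟫ = ‖x - p‖ ^ 2 / 2`. -/
lemma exists_abs_inner_le_of_disjoint_openCap {a a' p : E} {b b' : ℝ} (hp : ‖p‖ = 1)
    (hab : ⟪a, p⟫ = b) (hab' : ⟪a', p⟫ = b') (hα : a - b • p ≠ 0) (hβ : a' - b' • p ≠ 0)
    (hdisj : Disjoint (openCap a b) (openCap a' b')) :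
    ∃ u : E, ‖u‖ = 1 ∧ ⟪p, u⟫ = 0 ∧ ∃ c, 0 ≤ c ∧ ∀ x ∈ sphere (0 : E) 1,
      ⟪a, x⟫ < b → ⟪a', x⟫ < b' → |⟪u, x⟫| ≤ c * ‖x - p‖ ^ 2 := by
  have hopp := norm_smul_add_norm_smul_eq_zero_of_disjoint hp hab hab' hdisj
  set α := a - b • p
  set β := a' - b' • p
  have hA : 0 < ‖α‖ := norm_pos_iff.2 hα
  have hB : 0 < ‖β‖ := norm_pos_iff.2 hβ
  set u := ‖α‖⁻¹ • α
  have hαu : ∀ x, ⟪α, x⟫ = ‖α‖ * ⟪u, x⟫ := fun x => by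
    rw [real_inner_smul_left, mul_inv_cancel_left₀ hA.ne']
  have hβu : ∀ x, ⟪β, x⟫ = -‖β‖ * ⟪u, x⟫ := fun x => by
    have := congrArg (⟪·, x⟫) hopp
    simp only [inner_add_left, real_inner_smul_left, inner_zero_left, hαu x] at this
    refine mul_left_cancel₀ hA.ne' ?_
    linarith
  refine ⟨u, by simp [u, norm_smul, hA.ne'], by
    rw [real_inner_smul_right, inner_sub_smul_self hp hab, mul_zero], (|b| / ‖α‖ + |b'| / ‖β‖) / 2,
    by positivity, fun x hx hxa hxa' => ?_⟩
  have hx1 : ‖x‖ = 1 := mem_sphere_zero_iff_norm.1 hx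
  have hdist : ‖x - p‖ ^ 2 = 2 * (1 - ⟪p, x⟫) := by
    rw [norm_sub_sq_real, hx1, hp, real_inner_comm]; ring
  have hδ : 0 ≤ 1 - ⟪p, x⟫ := by
    have := real_inner_le_norm p x
    rw [hp, hx1, one_mul] at this
    linarith
  rw [inner_sub_smul_add b, hαu] at hxa
  rw [inner_sub_smul_add b', hβu] at hxa'
  have h₁ : ⟪u, x⟫ ≤ |b| / ‖α‖ * (1 - ⟪p, x⟫) := by
    rw [div_mul_eq_mul_div, le_div_iff₀ hA]
    nlinarith [le_abs_self b]
  have h₂ : -⟪u, x⟫ ≤ |b'| / ‖β‖ * (1 - ⟪p, x⟫) := by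
    rw [div_mul_eq_mul_div, le_div_iff₀ hB]
    nlinarith [le_abs_self b']
  have h₃ : 0 ≤ |b| / ‖α‖ * (1 - ⟪p, x⟫) := by positivity
  have h₄ : 0 ≤ |b'| / ‖β‖ * (1 - ⟪p, x⟫) := by positivity
  rw [hdist, abs_le]
  constructor <;> nlinarith

section Polyhedron

variable {ι : Type*} (a : ι → E) (b : ι → ℝ)

def openPolyhedron : Set E := ⋂ i, {x | ⟪a i, x⟫ < b i}

lemma sphere_diff_openPolyhedron :
    sphere (0 : E) 1 \ openPolyhedron a b = ⋃ i, closedCap (a i) (b i) := by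
  ext x
  simp [openPolyhedron, closedCap, and_comm]

lemma closure_openPolyhedron_subset :
    closure (openPolyhedron a b) ⊆ {x | ∀ i, ⟪a i, x⟫ ≤ b i} :=
  closure_minimal (fun _ hx i => (mem_iInter.1 hx i).le) <| by
    simp only [ofPred_forall]
    exact isClosed_iInter fun i =>
      isClosed_le (continuous_const.inner continuous_id) continuous_const

lemma closure_openPolyhedron (hne : (openPolyhedron a b).Nonempty) :
    closure (openPolyhedron a b) = {x | ∀ i, ⟪a i, x⟫ ≤ b i} := by
  refine (closure_openPolyhedron_subset a b).antisymm fun x hx => ?_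
  obtain ⟨q, hq⟩ := hne
  have hseg : Tendsto (fun t : ℝ => x + t • (q - x)) (𝓝[>] 0) (𝓝 x) := by
    have := (by fun_prop : Continuous fun t : ℝ => x + t • (q - x)).tendsto 0
    simpa using this.mono_left nhdsWithin_le_nhds
  refine mem_closure_of_tendsto hseg ?_
  filter_upwards [Ioo_mem_nhdsGT one_pos] with t ⟨ht₀, ht₁⟩
  refine mem_iInter.2 fun i => ?_
  have hqi : ⟪a i, q⟫ < b i := mem_iInter.1 hq i
  show ⟪a i, x + t • (q - x)⟫ < b i
  rw [inner_add_right, real_inner_smul_right, inner_sub_right]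
  nlinarith [hx i]

lemma openCap_subset_sphere_diff_closure (i : ι) :
    openCap (a i) (b i) ⊆ sphere (0 : E) 1 \ closure (openPolyhedron a b) :=
  fun _ hx => ⟨hx.1, fun h => (closure_openPolyhedron_subset a b h i).not_gt hx.2⟩

lemma sphere_diff_closure_openPolyhedron (hne : (openPolyhedron a b).Nonempty) :
    sphere (0 : E) 1 \ closure (openPolyhedron a b) = ⋃ i, openCap (a i) (b i) := by
  ext x
  simp [closure_openPolyhedron a b hne, openCap, and_comm]

lemma exists_closedCap_inter_nonempty [Finite ι] (hne : (openPolyhedron a b).Nonempty)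
    (hconn : IsPreconnected (sphere (0 : E) 1 \ openPolyhedron a b)) {I J : Set ι}
    (hIJ : ∀ k, (openCap (a k) (b k)).Nonempty → k ∈ I ∨ k ∈ J)
    (hI : ∃ i ∈ I, (openCap (a i) (b i)).Nonempty) (hJ : ∃ j ∈ J, (openCap (a j) (b j)).Nonempty) :
    ∃ i ∈ I, ∃ j ∈ J, (openCap (a i) (b i)).Nonempty ∧ (openCap (a j) (b j)).Nonempty ∧
      (closedCap (a i) (b i) ∩ closedCap (a j) (b j)).Nonempty := by
  set K : Set ι := {k | (openCap (a k) (b k)).Nonempty}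
  have hclosed : ∀ L : Set ι, IsClosed (⋃ k ∈ L, closedCap (a k) (b k)) := fun L =>
    L.toFinite.isClosed_biUnion fun k _ => isClosed_closedCap _ _
  -- caps with empty interior are tangent to the sphere, so they meet it in at most one point
  have hW : (⋃ k ∈ Kᶜ, closedCap (a k) (b k)).Finite := by
    obtain ⟨q, hq⟩ := hne
    exact Kᶜ.toFinite.biUnion fun k hk => (subsingleton_closedCap ⟨q, mem_iInter.1 hq k⟩
      (not_nonempty_iff_eq_empty.1 hk)).finite
  have hmeet : ∀ L : Set ι, (∃ i ∈ L, (openCap (a i) (b i)).Nonempty) →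
      ((sphere (0 : E) 1 \ openPolyhedron a b) ∩ ⋃ k ∈ L ∩ K, closedCap (a k) (b k)).Nonempty := by
    rintro L ⟨i, hiL, x, hx⟩
    refine ⟨x, ?_, mem_biUnion ⟨hiL, x, hx⟩ (openCap_subset_closedCap _ _ hx)⟩
    rw [sphere_diff_openPolyhedron]
    exact mem_iUnion.2 ⟨i, openCap_subset_closedCap _ _ hx⟩
  have hcov : sphere (0 : E) 1 \ openPolyhedron a b ⊆ (⋃ k ∈ I ∩ K, closedCap (a k) (b k)) ∪
      (⋃ k ∈ J ∩ K, closedCap (a k) (b k)) ∪ ⋃ k ∈ Kᶜ, closedCap (a k) (b k) := by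
    rw [sphere_diff_openPolyhedron]
    refine iUnion_subset fun k x hx => ?_
    by_cases hk : k ∈ K
    · rcases hIJ k hk with hkI | hkJ
      · exact Or.inl (Or.inl (mem_biUnion ⟨hkI, hk⟩ hx))
      · exact Or.inl (Or.inr (mem_biUnion ⟨hkJ, hk⟩ hx))
    · exact Or.inr (mem_biUnion hk hx)
  obtain ⟨z, -, hzI, hzJ⟩ := hconn.inter_nonempty_of_subset_union_finite (hclosed _) (hclosed _) hW
    hcov (hmeet I hI) (hmeet J hJ)
  obtain ⟨i, ⟨hiI, hiK⟩, hzi⟩ := mem_iUnion₂.1 hzI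
  obtain ⟨j, ⟨hjJ, hjK⟩, hzj⟩ := mem_iUnion₂.1 hzJ
  exact ⟨i, hiI, j, hjJ, hiK, hjK, z, hzi, hzj⟩

theorem exists_touching_caps [Finite ι]
    (hconn : IsPreconnected (sphere (0 : E) 1 \ openPolyhedron a b))
    (hdisc : ¬ IsPreconnected (sphere (0 : E) 1 \ closure (openPolyhedron a b))) :
    ∃ p ∈ closure (openPolyhedron a b) ∩ sphere (0 : E) 1, ∃ i j, ⟪a i, p⟫ = b i ∧
      ⟪a j, p⟫ = b j ∧ a i - b i • p ≠ 0 ∧ a j - b j • p ≠ 0 ∧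
      Disjoint (openCap (a i) (b i)) (openCap (a j) (b j)) := by
  obtain ⟨x₀, hx₀S, hx₀⟩ := inter_closure_nonempty_of_isPreconnected_diff hconn hdisc
  have hne : (openPolyhedron a b).Nonempty := closure_nonempty_iff.1 ⟨x₀, hx₀⟩
  rw [sphere_diff_closure_openPolyhedron a b hne] at hdisc
  obtain ⟨I, J, hIJ, hI, hJ, hdisj⟩ := exists_partition_of_not_isPreconnected_iUnion
    (fun k => isPreconnected_openCap ⟨x₀, hx₀S, closure_openPolyhedron_subset a b hx₀ k⟩) hdisc
  obtain ⟨i, hiI, j, hjJ, hi, hj, p, hpi, hpj⟩ :=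
    exists_closedCap_inter_nonempty a b hne hconn (fun k _ => hIJ k) hI hJ
  have hfar : ∀ k l, ¬ sphere (0 : E) 1 ⊆ openCap (a k) (b k) ∪ openCap (a l) (b l) :=
    fun k l h => (h hx₀S).elim (fun h => (openCap_subset_sphere_diff_closure a b k h).2 hx₀)
      (fun h => (openCap_subset_sphere_diff_closure a b l h).2 hx₀)
  have hp : ∀ k, p ∉ openCap (a k) (b k) := fun k => (hIJ k).elim
    (fun hk => notMem_openCap_of_disjoint hpj hj (hdisj k hk j hjJ) (hfar k j))
    (fun hk => notMem_openCap_of_disjoint hpi hi (hdisj i hiI k hk).symm (hfar k i))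
  have hpP : ∀ k, ⟪a k, p⟫ ≤ b k := fun k => not_lt.1 fun h => hp k ⟨hpi.1, h⟩
  have hp1 : ‖p‖ = 1 := mem_sphere_zero_iff_norm.1 hpi.1
  have hij := hdisj i hiI j hjJ
  refine ⟨p, ⟨(closure_openPolyhedron a b hne).symm ▸ hpP, hpi.1⟩, i, j, (hpP i).antisymm hpi.2,
    (hpP j).antisymm hpj.2, sub_smul_ne_zero_of_disjoint hp1 (hp j) hi hj hij,
    sub_smul_ne_zero_of_disjoint hp1 (hp i) hj hi hij.symm, hij⟩

end Polyhedron

lemma abs_sqrt_sub_sqrt_le {x y : ℝ} (hx : 1 / 4 ≤ x) (hy : 1 / 4 ≤ y) :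
    |√x - √y| ≤ |x - y| := by
  have hx' : 1 / 2 ≤ √x := (Real.le_sqrt (by norm_num) (by linarith)).2 (by linarith)
  have hy' : 1 / 2 ≤ √y := (Real.le_sqrt (by norm_num) (by linarith)).2 (by linarith)
  have hxy : x - y = (√x - √y) * (√x + √y) := by
    rw [mul_comm, ← sq_sub_sq, Real.sq_sqrt (by linarith), Real.sq_sqrt (by linarith)]
  rw [hxy, abs_mul, abs_of_pos (by linarith : 0 < √x + √y)]
  nlinarith [abs_nonneg (√x - √y)]

/-- The inverse of the orthogonal projection of the upper hemisphere around `e 0` onto the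
tangent hyperplane, in the coordinates of the remaining basis vectors. -/
noncomputable def hemisphereChart {m : ℕ} (e : OrthonormalBasis (Fin (m + 1)) ℝ E)
    (y : Fin m → ℝ) : E :=
  √(1 - ∑ i, y i ^ 2) • e 0 + ∑ i, y i • e i.succ

lemma lipschitzOnWith_hemisphereChart {m : ℕ} (e : OrthonormalBasis (Fin (m + 1)) ℝ E) :
    LipschitzOnWith (2 * m) (hemisphereChart e) {y | ∑ i, y i ^ 2 ≤ 1 / 4} := by
  rw [lipschitzOnWith_iff_norm_sub_le]
  intro y hy z hz
  have hcoord : ∀ i, |y i - z i| ≤ ‖y - z‖ := fun i => norm_le_pi_norm (y - z) i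
  have hsum : ∑ i, |y i - z i| ≤ m * ‖y - z‖ := by
    simpa using Finset.sum_le_sum fun i (_ : i ∈ Finset.univ) => hcoord i
  have hsmall : ∀ i, |y i + z i| ≤ 1 := fun i => by
    have hyi := Finset.single_le_sum (fun j _ => sq_nonneg (y j)) (Finset.mem_univ i)
    have hzi := Finset.single_le_sum (fun j _ => sq_nonneg (z j)) (Finset.mem_univ i)
    rw [← sq_le_one_iff_abs_le_one]
    nlinarith [sq_nonneg (y i - z i), hy.out, hz.out]
  have hsqrt : |√(1 - ∑ i, y i ^ 2) - √(1 - ∑ i, z i ^ 2)| ≤ ∑ i, |y i - z i| := by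
    refine (abs_sqrt_sub_sqrt_le (by linarith [hy.out]) (by linarith [hz.out])).trans ?_
    rw [sub_sub_sub_cancel_left, ← Finset.sum_sub_distrib]
    refine (Finset.abs_sum_le_sum_abs _ _).trans (Finset.sum_le_sum fun i _ => ?_)
    rw [sq_sub_sq, abs_mul, abs_sub_comm, add_comm]
    exact mul_le_of_le_one_left (abs_nonneg _) (hsmall i)
  have hdiff : hemisphereChart e y - hemisphereChart e z = (√(1 - ∑ i, y i ^ 2) -
      √(1 - ∑ i, z i ^ 2)) • e 0 + ∑ i, (y i - z i) • e i.succ := by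
    simp only [hemisphereChart, sub_smul, Finset.sum_sub_distrib]
    abel
  rw [hdiff]
  calc _ ≤ |√(1 - ∑ i, y i ^ 2) - √(1 - ∑ i, z i ^ 2)| + ∑ i, |y i - z i| := by
        refine (norm_add_le _ _).trans (add_le_add ?_ ((norm_sum_le _ _).trans_eq ?_))
        · rw [norm_smul, e.orthonormal.1 0, mul_one, Real.norm_eq_abs]
        · simp [norm_smul, e.orthonormal.1]
    _ ≤ (2 * m : ℝ) * ‖y - z‖ := by linarith
    _ = _ := by push_cast; ring

lemma inter_ball_subset_image_hemisphereChart {m : ℕ} (e : OrthonormalBasis (Fin (m + 2)) ℝ E)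
    {A : Set E} (hAS : A ⊆ sphere (0 : E) 1) {c : ℝ} (hc : 0 ≤ c)
    (hA : ∀ x ∈ A, |⟪e 1, x⟫| ≤ c * ‖x - e 0‖ ^ 2) {r : ℝ} (hr : r ≤ 1) :
    A ∩ ball (e 0) r ⊆
      hemisphereChart e '' {y | ∑ i, y i ^ 2 ≤ r ^ 2 ∧ |y 0| ≤ c * r ^ 2} := by
  rintro x ⟨hxA, hxr⟩
  have hx1 : ‖x‖ = 1 := mem_sphere_zero_iff_norm.1 (hAS hxA)
  have hp1 : ‖e 0‖ = 1 := e.orthonormal.1 0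
  rw [mem_ball, dist_eq_norm] at hxr
  have hdist : ‖x - e 0‖ ^ 2 = 2 - 2 * ⟪e 0, x⟫ := by
    rw [norm_sub_sq_real, hx1, hp1, real_inner_comm]; ring
  have hdist_le : ‖x - e 0‖ ^ 2 ≤ r ^ 2 := pow_le_pow_left₀ (norm_nonneg _) hxr.le 2
  have hpx : 0 ≤ ⟪e 0, x⟫ := by nlinarith [norm_nonneg (x - e 0)]
  have hparseval : ⟪e 0, x⟫ ^ 2 + ∑ i : Fin (m + 1), ⟪e i.succ, x⟫ ^ 2 = 1 := by
    have := e.sum_sq_norm_inner_right x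
    rw [Fin.sum_univ_succ] at this
    simpa only [Real.norm_eq_abs, sq_abs, hx1, one_pow] using this
  have hpx1 : ⟪e 0, x⟫ ≤ 1 := by
    nlinarith [Finset.sum_nonneg fun i (_ : i ∈ Finset.univ) => sq_nonneg ⟪e (Fin.succ i), x⟫]
  refine ⟨fun i => ⟪e i.succ, x⟫, ⟨?_, ?_⟩, ?_⟩
  · nlinarith
  · exact (hA x hxA).trans (mul_le_mul_of_nonneg_left hdist_le hc)
  · have hsqrt : √(1 - ∑ i : Fin (m + 1), ⟪e i.succ, x⟫ ^ 2) = ⟪e 0, x⟫ := by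
      rw [← hparseval, add_sub_cancel_right, Real.sqrt_sq hpx]
    simp only [hemisphereChart, hsqrt]
    conv_rhs => rw [← e.sum_repr' x, Fin.sum_univ_succ]

lemma hausdorffMeasure_slab_le {m : ℕ} {c r : ℝ} (hr : 0 ≤ r) :
    μH[(m + 1 : ℕ)] {y : Fin (m + 1) → ℝ | ∑ i, y i ^ 2 ≤ r ^ 2 ∧ |y 0| ≤ c * r ^ 2} ≤
      ENNReal.ofReal (2 * (c * r ^ 2)) * ENNReal.ofReal (2 * r) ^ m := by
  set w : Fin (m + 1) → ℝ := Fin.cons (c * r ^ 2) fun _ => r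
  have hbox : {y : Fin (m + 1) → ℝ | ∑ i, y i ^ 2 ≤ r ^ 2 ∧ |y 0| ≤ c * r ^ 2} ⊆
      univ.pi fun i => Icc (-w i) (w i) := by
    rintro y ⟨hy, hy0⟩ i -
    refine Fin.cases (abs_le.1 hy0) (fun i => abs_le.1 ?_) i
    exact abs_le_of_sq_le_sq' ((Finset.single_le_sum (fun j _ => sq_nonneg (y j))
      (Finset.mem_univ _)).trans hy) hr |> abs_le.2
  calc _ ≤ μH[(m + 1 : ℕ)] (univ.pi fun i => Icc (-w i) (w i)) := measure_mono hbox
    _ = ∏ i, volume (Icc (-w i) (w i)) := by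
      rw [show ((m + 1 : ℕ) : ℝ) = Fintype.card (Fin (m + 1)) by simp, hausdorffMeasure_pi_real,
        volume_pi_pi]
    _ = _ := by
      simp only [Fin.prod_univ_succ, Real.volume_Icc, w, Fin.cons_zero, Fin.cons_succ,
        Finset.prod_const, Finset.card_univ, Fintype.card_fin, sub_neg_eq_add, two_mul]

lemma exists_orthonormalBasis_zero_one [FiniteDimensional ℝ E] {m : ℕ}
    (hE : Module.finrank ℝ E = m + 2) {p u : E} (hp : ‖p‖ = 1) (hu : ‖u‖ = 1) (hpu : ⟪p, u⟫ = 0) :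
    ∃ e : OrthonormalBasis (Fin (m + 2)) ℝ E, e 0 = p ∧ e 1 = u := by
  classical
  have h10 : (1 : Fin (m + 2)) ≠ 0 := Fin.zero_lt_one.ne'
  set v : Fin (m + 2) → E := fun k => if k = 0 then p else u
  have hv : Orthonormal ℝ (({0, 1} : Set (Fin (m + 2))).domRestrict v) := by
    rw [orthonormal_iff_ite]
    rintro ⟨k, rfl | rfl⟩ ⟨l, rfl | rfl⟩ <;>
      simp [Set.domRestrict_apply, Subtype.ext_iff, v, h10, h10.symm, hpu, real_inner_comm p u,
        hp, hu]
  obtain ⟨e, he⟩ := hv.exists_orthonormalBasis_extension_of_card_eq (by simpa using hE)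
  exact ⟨e, by simpa [v] using he 0 (by simp), by simpa [v, h10] using he 1 (by simp)⟩

lemma liminf_div_ofReal_pow_eq_zero {f : ℝ → ℝ≥0∞} {C : ℝ} {k : ℕ}
    (hf : ∀ᶠ r in 𝓝[>] 0, f r ≤ ENNReal.ofReal (C * r ^ (k + 1))) :
    liminf (fun r => f r / ENNReal.ofReal (r ^ k)) (𝓝[>] 0) = 0 := by
  have hlin : Tendsto (fun r => ENNReal.ofReal (C * r)) (𝓝[>] 0) (𝓝 0) := by
    have := ENNReal.tendsto_ofReal ((continuous_const.mul continuous_id).tendsto' 0 (C * 0) rfl)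
    simpa using this.mono_left nhdsWithin_le_nhds
  refine (tendsto_of_tendsto_of_tendsto_of_le_of_le' tendsto_const_nhds hlin
    (Eventually.of_forall fun _ => bot_le) ?_).liminf_eq
  filter_upwards [hf, self_mem_nhdsWithin] with r hr hr₀
  calc f r / ENNReal.ofReal (r ^ k) ≤ ENNReal.ofReal (C * r ^ (k + 1)) / ENNReal.ofReal (r ^ k) :=
        ENNReal.div_le_div_right hr _
    _ = ENNReal.ofReal (C * r) := by
      rw [← ENNReal.ofReal_div_of_pos (pow_pos hr₀ k), pow_succ, ← mul_assoc, mul_right_comm,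
        mul_div_cancel_right₀ _ (pow_pos hr₀ k).ne']

theorem liminf_hausdorffMeasure_inter_ball_div_eq_zero [FiniteDimensional ℝ E]
    [MeasurableSpace E] [BorelSpace E] {n : ℕ} (hE : Module.finrank ℝ E = n + 1) {A : Set E}
    (hAS : A ⊆ sphere (0 : E) 1) {p u : E} (hp : ‖p‖ = 1) (hu : ‖u‖ = 1) (hpu : ⟪p, u⟫ = 0)
    {c : ℝ} (hc : 0 ≤ c) (hA : ∀ x ∈ A, |⟪u, x⟫| ≤ c * ‖x - p‖ ^ 2) :
    liminf (fun r => μH[n] (A ∩ ball p r) / ENNReal.ofReal (r ^ n)) (𝓝[>] 0) = 0 := by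
  obtain ⟨m, rfl⟩ : ∃ m, n = m + 1 := by
    have hON : Orthonormal ℝ ![p, u] := by
      simp [orthonormal_iff_ite, Fin.forall_fin_two, hp, hu, hpu, real_inner_comm p u]
    have := hON.linearIndependent.fintype_card_le_finrank
    rw [hE, Fintype.card_fin] at this
    exact ⟨n - 1, by omega⟩
  obtain ⟨e, rfl, rfl⟩ := exists_orthonormalBasis_zero_one hE hp hu hpu
  refine liminf_div_ofReal_pow_eq_zero (C := (2 * (m + 1)) ^ (m + 1) * (2 * c) * 2 ^ m) ?_
  filter_upwards [Ioo_mem_nhdsGT (by norm_num : (0 : ℝ) < 1 / 2)] with r ⟨hr₀, hr⟩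
  set D := {y : Fin (m + 1) → ℝ | ∑ i, y i ^ 2 ≤ r ^ 2 ∧ |y 0| ≤ c * r ^ 2}
  have hD : D ⊆ {y | ∑ i, y i ^ 2 ≤ 1 / 4} := fun y hy =>
    show ∑ i, y i ^ 2 ≤ 1 / 4 by nlinarith [hy.1]
  calc μH[(m + 1 : ℕ)] (A ∩ ball (e 0) r)
      ≤ μH[(m + 1 : ℕ)] (hemisphereChart e '' D) :=
        measure_mono (inter_ball_subset_image_hemisphereChart e hAS hc hA (by linarith))
    _ ≤ (2 * (m + 1 : ℕ) : ℝ≥0) ^ ((m + 1 : ℕ) : ℝ) * μH[(m + 1 : ℕ)] D := by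
        simpa using ((lipschitzOnWith_hemisphereChart e).mono hD).hausdorffMeasure_image_le
          (Nat.cast_nonneg (m + 1))
    _ ≤ (2 * (m + 1 : ℕ) : ℝ≥0) ^ ((m + 1 : ℕ) : ℝ) *
          (ENNReal.ofReal (2 * (c * r ^ 2)) * ENNReal.ofReal (2 * r) ^ m) := by
        gcongr; exact hausdorffMeasure_slab_le hr₀.le
    _ = ENNReal.ofReal ((2 * (m + 1)) ^ (m + 1) * (2 * c) * 2 ^ m * r ^ (m + 1 + 1)) := by
        rw [ENNReal.rpow_natCast, ← ENNReal.ofReal_pow (by positivity), ← ENNReal.ofReal_coe_nnreal,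
          ← ENNReal.ofReal_pow (by positivity), ← ENNReal.ofReal_mul (by positivity),
          ← ENNReal.ofReal_mul (by positivity)]
        congr 1
        push_cast
        ring

end PolyhedronSphere

open PolyhedronSphere in
/-- If `P ⊂ ℝ^{n+1}` is an open convex polyhedron (a finite intersection of open
halfspaces) such that `S^n \ P` is connected while `S^n \ closure P` is disconnected,
then there exists a point `p ∈ closure P ∩ S^n` at which the lower density of
`P ∩ S^n` vanishes. -/
theorem polyhedron_sphere_zero_density {n : ℕ} {ι : Type*} [Fintype ι]
    (a : ι → EuclideanSpace ℝ (Fin (n + 1))) (b : ι → ℝ)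
    (P : Set (EuclideanSpace ℝ (Fin (n + 1))))
    (hP : P = ⋂ i, {x | ⟪a i, x⟫ < b i})
    (hconn : IsConnected (Metric.sphere (0 : EuclideanSpace ℝ (Fin (n + 1))) 1 \ P))
    (hdisc : ¬ IsPreconnected
      (Metric.sphere (0 : EuclideanSpace ℝ (Fin (n + 1))) 1 \ closure P)) :
    ∃ p ∈ closure P ∩ Metric.sphere (0 : EuclideanSpace ℝ (Fin (n + 1))) 1,
      Filter.liminf
        (fun r : ℝ =>
          μH[(n : ℝ)]
            (P ∩ Metric.sphere (0 : EuclideanSpace ℝ (Fin (n + 1))) 1 ∩ Metric.ball p r)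
            / ENNReal.ofReal (r ^ n))
        (𝓝[>] (0 : ℝ)) = 0 := by
  obtain rfl : P = openPolyhedron a b := hP
  obtain ⟨p, hp, i, j, hpi, hpj, hαi, hαj, hdisj⟩ :=
    exists_touching_caps a b hconn.isPreconnected hdisc
  have hp1 : ‖p‖ = 1 := mem_sphere_zero_iff_norm.1 hp.2
  obtain ⟨u, hu, hpu, c, hc, hslab⟩ :=
    exists_abs_inner_le_of_disjoint_openCap hp1 hpi hpj hαi hαj hdisj
  refine ⟨p, hp, liminf_hausdorffMeasure_inter_ball_div_eq_zero finrank_euclideanSpace_fin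
    Set.inter_subset_right hp1 hu hpu hc ?_⟩
  rintro x ⟨hxP, hxS⟩
  exact hslab x hxS (Set.mem_iInter.1 hxP i) (Set.mem_iInter.1 hxP j)
end

section
/- For a closed polygonal line in ℝ^n with m ≥ 3 vertices, the sum of interior angles is at most (m-2)·180°, with equality when the polygon is planar and convex. -/
/-!
Induct on the number of vertices by cutting off the last one, `v (k + 2)`. By the triangle
inequality for angles at `v 0` and at `v (k + 1)`, this lowers the angle sum by at most the
angle sum `π` of the triangle `v 0, v (k + 1), v (k + 2)`; that triangle may be degenerate, since
the three angles add up to `π` as soon as two of its vertices differ.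
-/

open EuclideanGeometry Finset Real

section

variable {V P : Type*} [NormedAddCommGroup V] [InnerProductSpace ℝ V] [MetricSpace P]
  [NormedAddTorsor V P]

theorem angle_sum_polygon_le (v : ℕ → P) (k : ℕ) (hv : ∀ j ≤ k, v j ≠ v (j + 1)) :
    ∠ (v (k + 1)) (v 0) (v 1) + ∑ i ∈ range k, ∠ (v i) (v (i + 1)) (v (i + 2))
      + ∠ (v k) (v (k + 1)) (v 0) ≤ k * π := by
  induction k with
  | zero =>
    have h01 := hv 0 le_rfl
    simp [angle_self_of_ne h01, angle_self_of_ne h01.symm]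
  | succ k ih =>
    have ih := ih fun j hj => hv j (by omega)
    have apex := angle_le_angle_add_angle (v 0) (v (k + 2)) (v (k + 1)) (v 1)
    have corner := angle_le_angle_add_angle (v (k + 1)) (v k) (v 0) (v (k + 2))
    have triangle := angle_add_angle_add_angle_eq_pi (v 0) (hv (k + 1) le_rfl).symm
    rw [sum_range_succ]
    push_cast
    linarith

open Fin.NatCast in
theorem sum_angle_fin_eq_sum_range (k : ℕ) (v : Fin (k + 2) → P) :
    ∑ j, ∠ (v (j - 1)) (v j) (v (j + 1)) =
      ∠ (v (k + 1 : ℕ)) (v 0) (v 1)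
        + ∑ i ∈ range k, ∠ (v (i : ℕ)) (v (i + 1 : ℕ)) (v (i + 2 : ℕ))
        + ∠ (v (k : ℕ)) (v (k + 1 : ℕ)) (v 0) := by
  let g : ℕ → ℝ := fun i => ∠ (v ((i : Fin (k + 2)) - 1)) (v i) (v ((i : Fin (k + 2)) + 1))
  have add_one_add_one (x : Fin (k + 2)) : x + 1 + 1 = x + 2 := by
    rw [add_assoc, one_add_one_eq_two]
  have hlast : (k : Fin (k + 2)) + 2 = 0 := by exact_mod_cast Fin.natCast_self (k + 2)
  have hneg_one : (-1 : Fin (k + 2)) = k + 1 :=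
    (eq_neg_of_add_eq_zero_left (by rwa [← add_one_add_one] at hlast)).symm
  calc ∑ j, ∠ (v (j - 1)) (v j) (v (j + 1)) = ∑ j : Fin (k + 2), g j := by simp [g]
    _ = ∑ i ∈ range (k + 2), g i := Fin.sum_univ_eq_sum_range g _
    _ = _ := by
      rw [sum_range_succ, sum_range_succ']
      simp only [g, Nat.cast_add, Nat.cast_one, Nat.cast_ofNat, Nat.cast_zero, zero_sub, zero_add,
        add_sub_cancel_right, add_one_add_one, hlast, hneg_one]
      ring

open Fin.NatCast in
theorem angle_sum_fin_polygon_le (k : ℕ) (v : Fin (k + 2) → P) (hv : ∀ j, v j ≠ v (j + 1)) :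
    ∑ j, ∠ (v (j - 1)) (v j) (v (j + 1)) ≤ k * π := by
  rw [sum_angle_fin_eq_sum_range]
  exact angle_sum_polygon_le (fun i => v i) k fun j _ => by simpa using hv j

end

open EuclideanGeometry Real in
/-- Fenchel-type bound for closed polygonal lines: the sum of the interior angles of a
closed polygonal line with `m ≥ 3` vertices in `ℝ^n` (consecutive vertices distinct) is
at most `(m-2)·180°`, i.e. `(m-2)·π`. -/
theorem polygon_angle_sum_le {n m : ℕ} [NeZero m] (hm : 3 ≤ m)
    (v : Fin m → EuclideanSpace ℝ (Fin n))
    (hdist : ∀ j : Fin m, v j ≠ v (j + 1)) :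
    (∑ j : Fin m, EuclideanGeometry.angle (v (j - 1)) (v j) (v (j + 1)))
      ≤ ((m : ℝ) - 2) * Real.pi := by
  obtain ⟨k, rfl⟩ : ∃ k, m = k + 2 := ⟨m - 2, by omega⟩
  push_cast
  simpa using angle_sum_fin_polygon_le k v hdist
end

section
/- Let Ω be a spherical Voronoi q-cluster on S^n given by cells Ω_i = int{p ∈ S^n : argmin_j (⟨c_j,p⟩ + k_j) = i} with parameters c_i ∈ ℝ^{n+1}, k_i ∈ ℝ. Then for any U in the orthochronous Lorentz group O₁⁺(n+2), letting T_U be the induced Möbius automorphism of S^n (via the projective action on the future light cone), the cluster T_U Ω is again a spherical Voronoi cluster, with homogeneous parameters U·(c_i, -k_i), i = 1,...,q. -/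
open Matrix

/-- The Minkowski inner product on `ℝ^{n+2}`. -/
noncomputable def minkInner {n : ℕ} (x y : Fin (n + 2) → ℝ) : ℝ :=
  (∑ i : Fin (n + 1), x i.castSucc * y i.castSucc)
    - x (Fin.last (n + 1)) * y (Fin.last (n + 1))

/-- The (open) `i`-th cell of the spherical Voronoi cluster on `S^n ⊂ ℝ^{n+1}` with
quasi-center parameters `c` and curvature parameters `k`:
`Ω_i = {p ∈ S^n : ⟨c_i,p⟩ + k_i < ⟨c_j,p⟩ + k_j for all j ≠ i}`. -/
def svCell {n q : ℕ} (c : Fin q → Fin (n + 1) → ℝ) (k : Fin q → ℝ) (i : Fin q) :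
    Set (Fin (n + 1) → ℝ) :=
  {p | p ⬝ᵥ p = 1 ∧ ∀ j, j ≠ i → c i ⬝ᵥ p + k i < c j ⬝ᵥ p + k j}

/-- The homogeneous spherical Voronoi parameters `ck_i = (c_i, -k_i) ∈ ℝ^{n+2}`. -/
def homParams {n q : ℕ} (c : Fin q → Fin (n + 1) → ℝ) (k : Fin q → ℝ) :
    Fin q → Fin (n + 2) → ℝ :=
  fun i => Fin.snoc (c i) (-(k i))

/-- The Möbius automorphism of `S^n` induced by a Lorentz matrix `U`, via the projective
action on the future light cone: `p ↦` the first `n+1` coordinates of `U(p,1)` divided by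
its last coordinate. -/
noncomputable def mobiusOfLorentz {n : ℕ} (U : Matrix (Fin (n + 2)) (Fin (n + 2)) ℝ)
    (p : Fin (n + 1) → ℝ) : Fin (n + 1) → ℝ :=
  fun m => (U *ᵥ Fin.snoc p 1) m.castSucc / (U *ᵥ Fin.snoc p 1) (Fin.last (n + 1))

def Jm (n : ℕ) : Matrix (Fin (n+2)) (Fin (n+2)) ℝ :=
  Matrix.diagonal (fun i => if i = Fin.last (n + 1) then (-1 : ℝ) else 1)

lemma Jm_mul_Jm {n : ℕ} : Jm n * Jm n = 1 := by
  rw [Jm, Matrix.diagonal_mul_diagonal]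
  have : (fun i : Fin (n+2) => (if i = Fin.last (n+1) then (-1:ℝ) else 1) *
      (if i = Fin.last (n+1) then (-1:ℝ) else 1)) = fun _ => 1 := by
    funext i; split_ifs <;> norm_num
  rw [this, Matrix.diagonal_one]

lemma Jm_cancel {n : ℕ} (X : Matrix (Fin (n+2)) (Fin (n+2)) ℝ) :
    Jm n * (Jm n * X) = X := by
  rw [← mul_assoc, Jm_mul_Jm, one_mul]

lemma minkInner_eq {n : ℕ} (x y : Fin (n+2) → ℝ) :
    x ⬝ᵥ (Jm n *ᵥ y) = minkInner x y := by
  have hne : ∀ i : Fin (n+1), (i.castSucc : Fin (n+2)) ≠ Fin.last (n+1) :=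
    fun i => (Fin.castSucc_lt_last i).ne
  simp only [minkInner, dotProduct, Jm, Matrix.mulVec_diagonal]
  rw [Fin.sum_univ_castSucc]
  simp [hne]
  ring

lemma mink_inv {n : ℕ} {U : Matrix (Fin (n+2)) (Fin (n+2)) ℝ}
    (hU : Uᵀ * Jm n * U = Jm n) (x y : Fin (n+2) → ℝ) :
    minkInner (U *ᵥ x) (U *ᵥ y) = minkInner x y := by
  rw [← minkInner_eq, ← minkInner_eq, Matrix.mulVec_mulVec, Matrix.dotProduct_mulVec,
    ← Matrix.vecMul_transpose, Matrix.vecMul_vecMul, ← mul_assoc, hU,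
    ← Matrix.dotProduct_mulVec]

lemma left_inv_lorentz {n : ℕ} {U : Matrix (Fin (n+2)) (Fin (n+2)) ℝ}
    (hU : Uᵀ * Jm n * U = Jm n) : (Jm n * Uᵀ * Jm n) * U = 1 := by
  have h : Jm n * (Uᵀ * (Jm n * U)) = 1 := by
    have h2 : Jm n * (Uᵀ * Jm n * U) = 1 := by rw [hU, Jm_mul_Jm]
    simp only [mul_assoc] at h2 ⊢
    exact h2
  calc (Jm n * Uᵀ * Jm n) * U = Jm n * (Uᵀ * (Jm n * U)) := by
        simp only [mul_assoc]
    _ = 1 := h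

lemma right_inv_lorentz {n : ℕ} {U : Matrix (Fin (n+2)) (Fin (n+2)) ℝ}
    (hU : Uᵀ * Jm n * U = Jm n) : U * (Jm n * Uᵀ * Jm n) = 1 :=
  mul_eq_one_comm.mp (left_inv_lorentz hU)

lemma UJUt {n : ℕ} {U : Matrix (Fin (n+2)) (Fin (n+2)) ℝ}
    (hU : Uᵀ * Jm n * U = Jm n) : U * Jm n * Uᵀ = Jm n := by
  have h := right_inv_lorentz hU
  calc U * Jm n * Uᵀ = U * Jm n * Uᵀ * (Jm n * Jm n) := by rw [Jm_mul_Jm, mul_one]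
    _ = (U * (Jm n * Uᵀ * Jm n)) * Jm n := by simp only [mul_assoc]
    _ = 1 * Jm n := by rw [h]
    _ = Jm n := one_mul _

lemma row_sum {n : ℕ} {U : Matrix (Fin (n+2)) (Fin (n+2)) ℝ}
    (hU : Uᵀ * Jm n * U = Jm n) :
    ∑ i : Fin (n+1), (U (Fin.last (n+1)) i.castSucc)^2
      = (U (Fin.last (n+1)) (Fin.last (n+1)))^2 - 1 := by
  have hne : ∀ i : Fin (n+1), (i.castSucc : Fin (n+2)) ≠ Fin.last (n+1) :=
    fun i => (Fin.castSucc_lt_last i).ne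
  have h := congrFun (congrFun (UJUt hU) (Fin.last (n+1))) (Fin.last (n+1))
  rw [Jm] at h
  rw [Matrix.mul_apply] at h
  simp only [Matrix.mul_diagonal, Matrix.transpose_apply, Matrix.diagonal_apply_eq] at h
  rw [Fin.sum_univ_castSucc] at h
  simp [hne] at h
  have h2 : ∑ i : Fin (n+1), (U (Fin.last (n+1)) i.castSucc)^2
      = ∑ i : Fin (n+1), U (Fin.last (n+1)) i.castSucc * U (Fin.last (n+1)) i.castSucc :=
    Finset.sum_congr rfl (fun i _ => by ring)
  rw [h2]
  nlinarith [h]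

lemma lastPos {n : ℕ} {U : Matrix (Fin (n+2)) (Fin (n+2)) ℝ}
    (hU : Uᵀ * Jm n * U = Jm n)
    (hUorth : 0 < U (Fin.last (n+1)) (Fin.last (n+1)))
    (p : Fin (n+1) → ℝ) (hp : p ⬝ᵥ p = 1) :
    0 < (U *ᵥ Fin.snoc p 1) (Fin.last (n+1)) := by
  have hy : (U *ᵥ Fin.snoc p 1) (Fin.last (n+1))
      = (∑ i : Fin (n+1), U (Fin.last (n+1)) i.castSucc * p i)
        + U (Fin.last (n+1)) (Fin.last (n+1)) := by
    show (fun j => U (Fin.last (n+1)) j) ⬝ᵥ Fin.snoc p 1 = _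
    rw [dotProduct, Fin.sum_univ_castSucc]
    simp [Fin.snoc_castSucc, Fin.snoc_last]
  have hcs := Finset.sum_mul_sq_le_sq_mul_sq Finset.univ
    (fun i : Fin (n+1) => U (Fin.last (n+1)) i.castSucc) p
  have hsum := row_sum hU
  have hp2 : ∑ i : Fin (n+1), p i ^ 2 = 1 := by
    rw [← hp, dotProduct]
    exact Finset.sum_congr rfl (fun i _ => by ring)
  simp only [hsum, hp2, mul_one] at hcs
  rw [hy]
  nlinarith [hcs, hUorth]

lemma mink_snoc {n : ℕ} (cc p : Fin (n+1) → ℝ) (kk : ℝ) :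
    minkInner (Fin.snoc cc (-kk)) (Fin.snoc p 1) = cc ⬝ᵥ p + kk := by
  simp [minkInner, dotProduct, Fin.snoc_castSucc, Fin.snoc_last]

lemma mink_self_snoc {n : ℕ} (p : Fin (n+1) → ℝ) (hp : p ⬝ᵥ p = 1) :
    minkInner (Fin.snoc p (1:ℝ)) (Fin.snoc p 1) = 0 := by
  simp only [minkInner, Fin.snoc_castSucc, Fin.snoc_last, mul_one]
  rw [show ∑ i : Fin (n+1), p i * p i = p ⬝ᵥ p from rfl, hp]
  ring

lemma image_sphere {n : ℕ} {U : Matrix (Fin (n+2)) (Fin (n+2)) ℝ}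
    (hU : Uᵀ * Jm n * U = Jm n)
    (hUorth : 0 < U (Fin.last (n+1)) (Fin.last (n+1)))
    (p : Fin (n+1) → ℝ) (hp : p ⬝ᵥ p = 1) :
    (mobiusOfLorentz U p) ⬝ᵥ (mobiusOfLorentz U p) = 1 := by
  have ht : 0 < (U *ᵥ Fin.snoc p 1) (Fin.last (n+1)) := lastPos hU hUorth p hp
  have h0 : minkInner (U *ᵥ Fin.snoc p (1:ℝ)) (U *ᵥ Fin.snoc p 1) = 0 := by
    rw [mink_inv hU]; exact mink_self_snoc p hp
  rw [minkInner] at h0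
  rw [dotProduct]
  simp only [mobiusOfLorentz, div_mul_div_comm]
  rw [← Finset.sum_div]
  have hs : ∑ m : Fin (n+1), (U *ᵥ Fin.snoc p 1) m.castSucc * (U *ᵥ Fin.snoc p 1) m.castSucc
      = (U *ᵥ Fin.snoc p 1) (Fin.last (n+1)) * (U *ᵥ Fin.snoc p 1) (Fin.last (n+1)) := by
    linarith [h0]
  rw [hs]
  exact div_self (by positivity)

lemma value_eq {n : ℕ} {U : Matrix (Fin (n+2)) (Fin (n+2)) ℝ}
    (hU : Uᵀ * Jm n * U = Jm n)
    (hUorth : 0 < U (Fin.last (n+1)) (Fin.last (n+1)))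
    (p : Fin (n+1) → ℝ) (hp : p ⬝ᵥ p = 1) (v : Fin (n+2) → ℝ) :
    (fun m : Fin (n+1) => (U *ᵥ v) m.castSucc) ⬝ᵥ (mobiusOfLorentz U p)
      + -((U *ᵥ v) (Fin.last (n+1)))
    = minkInner v (Fin.snoc p 1) / (U *ᵥ Fin.snoc p 1) (Fin.last (n+1)) := by
  have ht := lastPos hU hUorth p hp
  have key : minkInner v (Fin.snoc p (1:ℝ))
      = (∑ m : Fin (n+1), (U *ᵥ v) m.castSucc * (U *ᵥ Fin.snoc p 1) m.castSucc)
        - (U *ᵥ v) (Fin.last (n+1)) * (U *ᵥ Fin.snoc p 1) (Fin.last (n+1)) := by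
    rw [← mink_inv hU v (Fin.snoc p 1)]; rfl
  rw [key, sub_div, mul_div_cancel_right₀ _ ht.ne', sub_eq_add_neg]
  congr 1
  rw [dotProduct, Finset.sum_div]
  exact Finset.sum_congr rfl (fun m _ => by simp [mobiusOfLorentz, mul_div_assoc])

lemma hom_of_image {n q : ℕ} (c : Fin q → Fin (n + 1) → ℝ) (k : Fin q → ℝ)
    (U : Matrix (Fin (n+2)) (Fin (n+2)) ℝ) (j : Fin q) :
    homParams (fun i m => (U *ᵥ homParams c k i) m.castSucc)
      (fun i => -((U *ᵥ homParams c k i) (Fin.last (n + 1)))) j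
      = U *ᵥ homParams c k j := by
  funext x
  refine Fin.lastCases ?_ (fun m => ?_) x <;> simp [homParams]

lemma fwd {n q : ℕ} (c : Fin q → Fin (n + 1) → ℝ) (k : Fin q → ℝ)
    {U : Matrix (Fin (n+2)) (Fin (n+2)) ℝ}
    (hU : Uᵀ * Jm n * U = Jm n)
    (hUorth : 0 < U (Fin.last (n+1)) (Fin.last (n+1)))
    (i : Fin q) (p : Fin (n+1) → ℝ) (hp : p ∈ svCell c k i) :
    mobiusOfLorentz U p ∈ svCell (fun i m => (U *ᵥ homParams c k i) m.castSucc)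
      (fun i => -((U *ᵥ homParams c k i) (Fin.last (n + 1)))) i := by
  obtain ⟨hp1, hp2⟩ := hp
  simp only [svCell, Set.mem_setOf_eq]
  refine ⟨image_sphere hU hUorth p hp1, fun j hj => ?_⟩
  have ht := lastPos hU hUorth p hp1
  rw [value_eq hU hUorth p hp1 (homParams c k i),
    value_eq hU hUorth p hp1 (homParams c k j)]
  refine (div_lt_div_iff_of_pos_right ht).mpr ?_
  simp only [homParams]
  rw [mink_snoc, mink_snoc]
  exact hp2 j hj

lemma mobius_comp {n : ℕ} {U V : Matrix (Fin (n+2)) (Fin (n+2)) ℝ}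
    (hUV : U * V = 1)
    (hV : Vᵀ * Jm n * V = Jm n)
    (hVorth : 0 < V (Fin.last (n+1)) (Fin.last (n+1)))
    (p : Fin (n+1) → ℝ) (hp : p ⬝ᵥ p = 1) :
    mobiusOfLorentz U (mobiusOfLorentz V p) = p := by
  have ht := lastPos hV hVorth p hp
  have hsnoc : Fin.snoc (mobiusOfLorentz V p) (1:ℝ)
      = ((V *ᵥ Fin.snoc p 1) (Fin.last (n+1)))⁻¹ • (V *ᵥ Fin.snoc p 1) := by
    funext x
    refine Fin.lastCases ?_ (fun m => ?_) x
    · simp only [Fin.snoc_last, Pi.smul_apply, smul_eq_mul]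
      rw [inv_mul_cancel₀ ht.ne']
    · simp only [Fin.snoc_castSucc, Pi.smul_apply, smul_eq_mul, mobiusOfLorentz]
      rw [div_eq_inv_mul]
  funext m
  show (U *ᵥ Fin.snoc (mobiusOfLorentz V p) 1) m.castSucc
      / (U *ᵥ Fin.snoc (mobiusOfLorentz V p) 1) (Fin.last (n+1)) = p m
  rw [hsnoc, Matrix.mulVec_smul, Matrix.mulVec_mulVec, hUV, Matrix.one_mulVec]
  simp only [Pi.smul_apply, smul_eq_mul, Fin.snoc_castSucc, Fin.snoc_last, mul_one]
  rw [mul_comm, mul_div_assoc, div_self (inv_ne_zero ht.ne'), mul_one]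


/-- Möbius automorphisms preserve spherical Voronoi clusters: if `U` is an orthochronous
Lorentz transformation (`Uᵀ J U = J`, `U_{n+2,n+2} > 0`) and `Ω` is the spherical Voronoi
cluster with parameters `(c_i, k_i)`, then `U` preserves the Minkowski form and the induced
Möbius map `T_U` carries each cell `Ω_i` onto the cell of the spherical Voronoi cluster
whose homogeneous parameters are `U·(c_i, -k_i)`. -/
theorem mobius_preserves_spherical_voronoi {n q : ℕ}
    (c : Fin q → Fin (n + 1) → ℝ) (k : Fin q → ℝ)
    (U : Matrix (Fin (n + 2)) (Fin (n + 2)) ℝ)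
    (hU : Uᵀ * Matrix.diagonal (fun i => if i = Fin.last (n + 1) then (-1 : ℝ) else 1) * U =
      Matrix.diagonal (fun i => if i = Fin.last (n + 1) then (-1 : ℝ) else 1))
    (hUorth : 0 < U (Fin.last (n + 1)) (Fin.last (n + 1))) :
    (∀ x y : Fin (n + 2) → ℝ, minkInner (U *ᵥ x) (U *ᵥ y) = minkInner x y) ∧
    (∀ i : Fin q,
      mobiusOfLorentz U '' svCell c k i =
        svCell (fun i m => (U *ᵥ homParams c k i) m.castSucc)
          (fun i => -((U *ᵥ homParams c k i) (Fin.last (n + 1)))) i) := by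
  have hU' : Uᵀ * Jm n * U = Jm n := hU
  constructor
  · exact fun x y => mink_inv hU' x y
  · intro i
    apply Set.eq_of_subset_of_subset
    · rintro _ ⟨p, hp, rfl⟩
      exact fwd c k hU' hUorth i p hp
    · intro p' hp'
      set V := Jm n * Uᵀ * Jm n with hVdef
      have hVU : V * U = 1 := left_inv_lorentz hU'
      have hUV : U * V = 1 := right_inv_lorentz hU'
      have hVt : Vᵀ = Jm n * U * Jm n := by
        rw [hVdef]
        simp only [Jm, Matrix.transpose_mul, Matrix.transpose_transpose,
          Matrix.diagonal_transpose, mul_assoc]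
      have hV : Vᵀ * Jm n * V = Jm n := by
        rw [hVt, hVdef]
        have hUJ := UJUt hU'
        have h2 : U * (Jm n * (Uᵀ * Jm n)) = 1 := by
          have h3 := congrArg (fun M => M * Jm n) hUJ
          simp only [mul_assoc] at h3
          rw [Jm_mul_Jm] at h3
          exact h3
        simp only [mul_assoc]
        rw [Jm_cancel, h2, mul_one]
      have hVlast : V (Fin.last (n+1)) (Fin.last (n+1))
          = U (Fin.last (n+1)) (Fin.last (n+1)) := by
        rw [hVdef, Jm]
        rw [Matrix.mul_diagonal, Matrix.diagonal_mul, Matrix.transpose_apply]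
        simp
      have hVorth : 0 < V (Fin.last (n+1)) (Fin.last (n+1)) := hVlast ▸ hUorth
      have hmem0 := fwd (fun i m => (U *ᵥ homParams c k i) m.castSucc)
        (fun i => -((U *ᵥ homParams c k i) (Fin.last (n + 1)))) hV hVorth i p' hp'
      have hcc : (fun j (m : Fin (n+1)) =>
          (V *ᵥ homParams (fun i m => (U *ᵥ homParams c k i) m.castSucc)
            (fun i => -((U *ᵥ homParams c k i) (Fin.last (n + 1)))) j) m.castSucc) = c := by
        funext j m
        rw [hom_of_image, Matrix.mulVec_mulVec, hVU, Matrix.one_mulVec]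
        simp [homParams]
      have hkk : (fun j =>
          -((V *ᵥ homParams (fun i m => (U *ᵥ homParams c k i) m.castSucc)
            (fun i => -((U *ᵥ homParams c k i) (Fin.last (n + 1)))) j) (Fin.last (n+1)))) = k := by
        funext j
        rw [hom_of_image, Matrix.mulVec_mulVec, hVU, Matrix.one_mulVec]
        simp [homParams]
      rw [hcc, hkk] at hmem0
      exact ⟨mobiusOfLorentz V p', hmem0, mobius_comp hUV hV hVorth p' hp'.1⟩
end
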